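/- arXiv:2011.05584 — 3 statements merged into one kernel-verified Lean document; each statement's English description precedes it below -/
import Mathlib

section
/- If K_1 and K_2 are disjoint compact subsets of C, then φ(K_1 ∪ K_2) = φ(K_1) + φ(K_2). -/
open MeasureTheory Matrix Set Filter Topology
open scoped ENNReal

noncomputable section

/-- The space `C` of continuous functions on `[0,1]` vanishing at `0`,
with the supremum metric (inherited from `C([0,1], ℝ)`). -/
abbrev Cz : Type := {f : C(Set.Icc (0:ℝ) 1, ℝ) // f ⟨0, ⟨le_refl 0, zero_le_one⟩⟩ = 0}

/-- The projection `π_n : C → ℝ^n`, `x ↦ (x(t_1), …, x(t_n))`. -/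
def proj (t : ℕ → ℝ) (ht : ∀ k, t k ∈ Set.Ioc (0:ℝ) 1) (n : ℕ) (x : Cz) : Fin n → ℝ :=
  fun i => (x : C(Set.Icc (0:ℝ) 1, ℝ)) ⟨t i, Set.Ioc_subset_Icc_self (ht i)⟩

/-- The covariance matrix `M_n` with entries `min (t j) (t r)`. -/
def covM (t : ℕ → ℝ) (n : ℕ) : Matrix (Fin n) (Fin n) ℝ :=
  Matrix.of fun j r => min (t (j : ℕ)) (t (r : ℕ))

/-- The centered Gaussian measure on `ℝ^n` with (positive definite) covariance matrix `M`:
the measure with density `u ↦ ((2π)^n det M)^{-1/2} exp (-⟨u, M⁻¹ u⟩ / 2)` w.r.t. Lebesgue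
measure. -/
def gauss (n : ℕ) (M : Matrix (Fin n) (Fin n) ℝ) : Measure (Fin n → ℝ) :=
  volume.withDensity fun u =>
    ENNReal.ofReal ((((2 * Real.pi) ^ n * M.det) ^ (-(1:ℝ)/2 : ℝ)) *
      Real.exp (-(u ⬝ᵥ M⁻¹.mulVec u) / 2))

/-- `φ(K) = inf_{n ≥ 1} ν_n (π_n(K))`. -/
def phi (t : ℕ → ℝ) (ht : ∀ k, t k ∈ Set.Ioc (0:ℝ) 1) (K : Set Cz) : ℝ≥0∞ :=
  ⨅ n : ℕ, gauss (n+1) (covM t (n+1)) (proj t ht (n+1) '' K)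

/-- `μ(A) = sup {φ(K) : K ⊆ A, K compact}`. -/
def mu (t : ℕ → ℝ) (ht : ∀ k, t k ∈ Set.Ioc (0:ℝ) 1) (A : Set Cz) : ℝ≥0∞ :=
  ⨆ (K : Set Cz) (_ : K ⊆ A) (_ : IsCompact K), phi t ht K

/-!
Forgetting the last coordinate pushes `ν_{n+1}` forward to `ν_n`: integrating the density over the
last variable is a completion of the square, driven by the block formulas for the inverse and the
determinant of `M_{n+1}` in terms of those of `M_n`. (The matrices `M_n` are positive definite
because `min (t_j, t_r)` is the `L²` inner product of the indicators of `(0, t_j]` and `(0, t_r]`.)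
Hence `n ↦ ν_n (π_n K)` is antitone and `φ` is its limit. If `K₁` and `K₂` are disjoint and
compact, compactness of `K₁ × K₂` and the density of `(t_k)` make `π_n K₁` and `π_n K₂`
disjoint for all large `n`, so the measures add from some index on, and so do their limits.
-/

namespace Matrix

variable {K : Type*} [Field K] {n : ℕ}

theorem snoc_dotProduct_mulVec_snoc (B : Matrix (Fin (n+1)) (Fin (n+1)) K) (v : Fin n → K)
    (s : K) :
    (Fin.snoc v s : Fin (n+1) → K) ⬝ᵥ B *ᵥ Fin.snoc v s =
      v ⬝ᵥ B.submatrix Fin.castSucc Fin.castSucc *ᵥ v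
        + s * ((fun j => B (Fin.last n) j.castSucc) ⬝ᵥ v)
        + s * (v ⬝ᵥ fun i => B i.castSucc (Fin.last n))
        + B (Fin.last n) (Fin.last n) * s ^ 2 := by
  simp only [dotProduct, mulVec, Fin.sum_univ_castSucc, Fin.snoc_castSucc, Fin.snoc_last,
    submatrix_apply, mul_add, Finset.sum_add_distrib, Finset.mul_sum]
  ring_nf

variable {M : Matrix (Fin (n+1)) (Fin (n+1)) K}

theorem inv_apply_last_mul_det (hM : IsUnit M.det) :
    M⁻¹ (Fin.last n) (Fin.last n) * M.det = (M.submatrix Fin.castSucc Fin.castSucc).det := by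
  rw [inv_def, smul_apply, adjugate_fin_succ_eq_det_submatrix, Fin.succAbove_last,
    Even.neg_one_pow ⟨n, by simp⟩, one_mul, smul_eq_mul, mul_right_comm,
    Ring.inverse_mul_cancel _ hM, one_mul]

theorem inv_submatrix_castSucc (hM : IsUnit M.det) (hα : M⁻¹ (Fin.last n) (Fin.last n) ≠ 0) :
    (M.submatrix Fin.castSucc Fin.castSucc)⁻¹ = M⁻¹.submatrix Fin.castSucc Fin.castSucc -
      (M⁻¹ (Fin.last n) (Fin.last n))⁻¹ •
        vecMulVec (fun i => M⁻¹ i.castSucc (Fin.last n))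
          (fun j => M⁻¹ (Fin.last n) j.castSucc) := by
  set Q := M⁻¹
  set b : Fin n → K := fun i => M i.castSucc (Fin.last n)
  have hMQ : M * Q = 1 := mul_nonsing_inv M hM
  have h₁ : M.submatrix Fin.castSucc Fin.castSucc * Q.submatrix Fin.castSucc Fin.castSucc
      + vecMulVec b (fun j => Q (Fin.last n) j.castSucc) = 1 := by
    ext i j
    have := congr_fun₂ hMQ i.castSucc j.castSucc
    rw [mul_apply, Fin.sum_univ_castSucc] at this
    simpa [mul_apply, vecMulVec_apply, one_apply] using this
  have h₂ : M.submatrix Fin.castSucc Fin.castSucc *ᵥ (fun i => Q i.castSucc (Fin.last n))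
      = -(Q (Fin.last n) (Fin.last n) • b) := by
    ext i
    have := congr_fun₂ hMQ i.castSucc (Fin.last n)
    rw [mul_apply, Fin.sum_univ_castSucc] at this
    simp [mulVec, dotProduct, b] at this ⊢
    linear_combination this
  refine inv_eq_right_inv ?_
  rw [mul_sub, Matrix.mul_smul, mul_vecMulVec, h₂, neg_vecMulVec, smul_vecMulVec, smul_neg,
    smul_smul, inv_mul_cancel₀ hα, one_smul, sub_neg_eq_add, h₁]

theorem snoc_dotProduct_inv_mulVec_snoc (hM : IsUnit M.det) (hMs : M.IsSymm)
    (hα : M⁻¹ (Fin.last n) (Fin.last n) ≠ 0) (v : Fin n → K) (s : K) :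
    (Fin.snoc v s : Fin (n+1) → K) ⬝ᵥ M⁻¹ *ᵥ Fin.snoc v s =
      v ⬝ᵥ (M.submatrix Fin.castSucc Fin.castSucc)⁻¹ *ᵥ v +
        M⁻¹ (Fin.last n) (Fin.last n) *
          (s + ((fun i => M⁻¹ i.castSucc (Fin.last n)) ⬝ᵥ v) /
            M⁻¹ (Fin.last n) (Fin.last n)) ^ 2 := by
  have hrow : (fun j : Fin n => M⁻¹ (Fin.last n) j.castSucc) =
      fun i => M⁻¹ i.castSucc (Fin.last n) :=
    funext fun j => hMs.inv.apply _ _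
  rw [snoc_dotProduct_mulVec_snoc, inv_submatrix_castSucc hM hα, hrow, sub_mulVec,
    smul_mulVec, vecMulVec_mulVec, dotProduct_sub, dotProduct_smul, dotProduct_smul,
    op_smul_eq_mul]
  set α := M⁻¹ (Fin.last n) (Fin.last n)
  set c : Fin n → K := fun i => M⁻¹ i.castSucc (Fin.last n)
  rw [dotProduct_comm v c]
  linear_combination (-(2 * s * (c ⬝ᵥ v) + α⁻¹ * (c ⬝ᵥ v) ^ 2)) * mul_inv_cancel₀ hα

end Matrix

def gaussDensity (n : ℕ) (M : Matrix (Fin n) (Fin n) ℝ) (u : Fin n → ℝ) : ℝ :=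
  (((2 * Real.pi) ^ n * M.det) ^ (-(1:ℝ)/2 : ℝ)) * Real.exp (-(u ⬝ᵥ M⁻¹.mulVec u) / 2)

theorem gauss_eq_withDensity (n : ℕ) (M : Matrix (Fin n) (Fin n) ℝ) :
    gauss n M = volume.withDensity fun u => ENNReal.ofReal (gaussDensity n M u) := rfl

theorem measurable_gaussDensity (n : ℕ) (M : Matrix (Fin n) (Fin n) ℝ) :
    Measurable (gaussDensity n M) := by
  unfold gaussDensity
  fun_prop

theorem gaussDensity_pos {n : ℕ} {M : Matrix (Fin n) (Fin n) ℝ} (hM : M.PosDef)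
    (u : Fin n → ℝ) :
    0 < gaussDensity n M u := by
  have := hM.det_pos
  unfold gaussDensity
  positivity

theorem integral_exp_neg_mul_add_sq (b c : ℝ) :
    ∫ s : ℝ, Real.exp (-b * (s + c) ^ 2) = √(Real.pi / b) := by
  rw [integral_add_right_eq_self (fun s => Real.exp (-b * s ^ 2)), integral_gaussian]

section Marginal

variable {n : ℕ} {M : Matrix (Fin (n+1)) (Fin (n+1)) ℝ}

theorem rpow_neg_one_half_mul_sqrt_pi_div {d a : ℝ} (hd : 0 < d) (ha : 0 < a) :
    ((2 * Real.pi) ^ (n+1) * d) ^ (-(1:ℝ)/2 : ℝ) * √(Real.pi / (a / 2))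
      = ((2 * Real.pi) ^ n * (a * d)) ^ (-(1:ℝ)/2 : ℝ) := by
  have hpow : ∀ x : ℝ, 0 < x → x ^ (-(1:ℝ)/2 : ℝ) = (√x)⁻¹ := fun x hx => by
    rw [neg_div, Real.rpow_neg hx.le, Real.sqrt_eq_rpow]
  have hratio : Real.pi / (a / 2) = (2 * Real.pi) ^ (n+1) * d / ((2 * Real.pi) ^ n * (a * d)) := by
    field_simp
    ring
  have hX : 0 < (2 * Real.pi) ^ (n+1) * d := by positivity
  rw [hpow _ hX, hpow _ (by positivity), hratio, Real.sqrt_div hX.le]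
  field_simp

theorem integral_gaussDensity_snoc (hM : M.PosDef) (v : Fin n → ℝ) :
    ∫ s, gaussDensity (n+1) M (Fin.snoc v s) =
      gaussDensity n (M.submatrix Fin.castSucc Fin.castSucc) v := by
  have hα : 0 < M⁻¹ (Fin.last n) (Fin.last n) := hM.inv.diag_pos
  have hdet : 0 < M.det := hM.det_pos
  have hsymm : M.IsSymm := isHermitian_iff_isSymm.mp hM.isHermitian
  set α := M⁻¹ (Fin.last n) (Fin.last n)
  set d := (fun i => M⁻¹ i.castSucc (Fin.last n)) ⬝ᵥ v / α
  have hsplit : ∀ s, gaussDensity (n+1) M (Fin.snoc v s) =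
      ((2 * Real.pi) ^ (n+1) * M.det) ^ (-(1:ℝ)/2 : ℝ) *
        Real.exp (-(v ⬝ᵥ (M.submatrix Fin.castSucc Fin.castSucc)⁻¹ *ᵥ v) / 2) *
        Real.exp (-(α / 2) * (s + d) ^ 2) := fun s => by
    rw [gaussDensity, snoc_dotProduct_inv_mulVec_snoc hdet.ne'.isUnit hsymm hα.ne', mul_assoc,
      ← Real.exp_add]
    simp only [α, d]
    ring_nf
  simp_rw [hsplit]
  rw [integral_const_mul, integral_exp_neg_mul_add_sq, gaussDensity, mul_right_comm,
    rpow_neg_one_half_mul_sqrt_pi_div hdet hα, inv_apply_last_mul_det hdet.ne'.isUnit]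

theorem lintegral_gaussDensity_snoc (hM : M.PosDef) (v : Fin n → ℝ) :
    ∫⁻ s, ENNReal.ofReal (gaussDensity (n+1) M (Fin.snoc v s)) =
      ENNReal.ofReal (gaussDensity n (M.submatrix Fin.castSucc Fin.castSucc) v) := by
  have hne : ∫ s, gaussDensity (n+1) M (Fin.snoc v s) ≠ 0 := by
    rw [integral_gaussDensity_snoc hM]
    exact (gaussDensity_pos (hM.submatrix (Fin.castSucc_injective n)) v).ne'
  rw [← ofReal_integral_eq_lintegral_ofReal (.of_integral_ne_zero hne)
    (ae_of_all _ fun s => (gaussDensity_pos hM _).le), integral_gaussDensity_snoc hM]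

theorem gauss_map_init (hM : M.PosDef) :
    (gauss (n+1) M).map Fin.init = gauss n (M.submatrix Fin.castSucc Fin.castSucc) := by
  have hinit : Measurable (Fin.init : (Fin (n+1) → ℝ) → Fin n → ℝ) := by fun_prop
  set e := (MeasurableEquiv.piFinSuccAbove (fun _ : Fin (n+1) => ℝ) (Fin.last n)).symm
  have he : MeasurePreserving e (volume.prod volume) volume :=
    (volume_preserving_piFinSuccAbove (fun _ : Fin (n+1) => ℝ) (Fin.last n)).symm _
  have he_apply : ∀ p : ℝ × (Fin n → ℝ), e p = Fin.snoc p.2 p.1 := fun p => by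
    simp [e, Fin.snocEquiv]
  ext S hS
  have hpre : e ⁻¹' (Fin.init ⁻¹' S) = univ ×ˢ S := by
    ext p
    simp [he_apply, Fin.init_snoc]
  rw [Measure.map_apply hinit hS, gauss_eq_withDensity, gauss_eq_withDensity,
    withDensity_apply _ (hinit hS), withDensity_apply _ hS,
    ← he.setLIntegral_comp_preimage_emb e.measurableEmbedding, hpre,
    setLIntegral_prod_symm (fun p => ENNReal.ofReal (gaussDensity (n+1) M (e p)))
      ((measurable_gaussDensity _ _).comp e.measurable).ennreal_ofReal.aemeasurable]
  simp only [he_apply, Measure.restrict_univ, lintegral_gaussDensity_snoc hM]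

end Marginal

def indicatorIoc (a b : ℝ) : Lp ℝ 2 (volume : Measure ℝ) :=
  indicatorConstLp 2 (measurableSet_Ioc : MeasurableSet (Ioc a b)) measure_Ioc_lt_top.ne 1

theorem inner_indicatorIoc (a b c d : ℝ) :
    inner ℝ (indicatorIoc a b) (indicatorIoc c d) = max (min b d - max a c) 0 := by
  rw [indicatorIoc, indicatorIoc, L2.real_inner_indicatorConstLp_one_indicatorConstLp_one _ _
      measure_Ioc_lt_top.ne measure_Ioc_lt_top.ne,
    Set.Ioc_inter_Ioc, Real.volume_real_Ioc]

theorem linearIndependent_indicatorIoc {ι : Type*} [Fintype ι] {t : ι → ℝ}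
    (ht : Function.Injective t) (hpos : ∀ i, 0 < t i) :
    LinearIndependent ℝ fun i => indicatorIoc 0 (t i) := by
  classical
  rw [Fintype.linearIndependent_iff]
  intro g hg
  by_contra! hne
  set S := Finset.univ.filter fun i => g i ≠ 0
  obtain ⟨i₀, hi₀S, hi₀max⟩ :=
    S.exists_max_image t (by simpa [S, Finset.Nonempty] using hne)
  set T := insert 0 ((S.erase i₀).image t)
  set m := T.max' (Finset.insert_nonempty _ _)
  have hm0 : 0 ≤ m := T.le_max' 0 (Finset.mem_insert_self _ _)
  have hle : ∀ i ∈ S, i ≠ i₀ → t i ≤ m := fun i hi hne =>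
    T.le_max' _ <| Finset.mem_insert_of_mem <|
      Finset.mem_image_of_mem _ (Finset.mem_erase.2 ⟨hne, hi⟩)
  have hlt : m < t i₀ := by
    refine (T.max'_lt_iff _).2 fun y hy => ?_
    simp only [T, Finset.mem_insert, Finset.mem_image, Finset.mem_erase] at hy
    obtain rfl | ⟨i, ⟨hne, hi⟩, rfl⟩ := hy
    · exact hpos i₀
    · exact (hi₀max i hi).lt_of_ne (ht.ne hne)
  -- pairing with the indicator of `(m, t i₀]` isolates the coefficient `g i₀`
  have hpair := congrArg (inner ℝ (indicatorIoc m (t i₀))) hg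
  simp only [inner_sum, inner_smul_right, inner_indicatorIoc, inner_zero_right] at hpair
  rw [Finset.sum_eq_single i₀] at hpair
  · rw [min_self, max_eq_left hm0, max_eq_left (sub_pos.2 hlt).le] at hpair
    exact mul_ne_zero (Finset.mem_filter.1 hi₀S).2 (sub_pos.2 hlt).ne' hpair
  · intro i _ hi
    by_cases hgi : g i = 0
    · rw [hgi, zero_mul]
    · have hi_le : t i ≤ m := hle i (Finset.mem_filter.2 ⟨Finset.mem_univ _, hgi⟩) hi
      rw [max_eq_right (sub_nonpos.2 ((min_le_right _ _).trans (hi_le.trans (le_max_left _ _)))),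
        mul_zero]
  · simp

theorem covM_posDef {t : ℕ → ℝ} (ht : Function.Injective t) (hpos : ∀ k, 0 < t k)
    (n : ℕ) : (covM t n).PosDef := by
  have hgram : covM t n = Matrix.gram ℝ fun i : Fin n => indicatorIoc 0 (t i) := by
    ext i j
    rw [Matrix.gram_apply, inner_indicatorIoc, max_self, sub_zero,
      max_eq_left (le_min (hpos i).le (hpos j).le)]
    rfl
  rw [hgram]
  exact Matrix.posDef_gram_of_linearIndependent
    (linearIndependent_indicatorIoc (ht.comp Fin.val_injective) fun i => hpos i)

theorem covM_submatrix_castSucc (t : ℕ → ℝ) (n : ℕ) :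
    (covM t (n+1)).submatrix Fin.castSucc Fin.castSucc = covM t n :=
  rfl

section Projections

variable {t : ℕ → ℝ} (ht : ∀ k, t k ∈ Set.Ioc (0:ℝ) 1)

theorem continuous_proj (n : ℕ) : Continuous (proj t ht n) :=
  continuous_pi fun _ => (continuous_eval_const _).comp continuous_subtype_val

theorem antitone_gauss_proj_image (htinj : Function.Injective t) (K : Set Cz) :
    Antitone fun n => gauss n (covM t n) (proj t ht n '' K) := by
  refine antitone_nat_of_succ_le fun n => ?_
  have hpos : ∀ k, 0 < t k := fun k => (ht k).1
  calc gauss (n+1) (covM t (n+1)) (proj t ht (n+1) '' K)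
      ≤ (gauss (n+1) (covM t (n+1))).map Fin.init (Fin.init '' (proj t ht (n+1) '' K)) :=
        Measure.le_map_apply_image (by fun_prop) _
    _ = gauss n (covM t n) (proj t ht n '' K) := by
        rw [gauss_map_init (covM_posDef htinj hpos _), covM_submatrix_castSucc, image_image]
        rfl

theorem phi_eq_iInf (htinj : Function.Injective t) (K : Set Cz) :
    phi t ht K = ⨅ n, gauss n (covM t n) (proj t ht n '' K) :=
  (antitone_gauss_proj_image ht htinj K).iInf_nat_add 1

theorem eq_of_forall_proj_eq (htdense : Set.Icc (0:ℝ) 1 ⊆ closure (Set.range t)) {x y : Cz}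
    (h : ∀ n, proj t ht n x = proj t ht n y) : x = y := by
  have hdense :
      DenseRange fun k => (⟨t k, Set.Ioc_subset_Icc_self (ht k)⟩ : Set.Icc (0:ℝ) 1) :=
    fun p => closure_subtype.2 (by rw [← range_comp]; exact htdense p.2)
  exact Subtype.ext <| ContinuousMap.coe_injective <|
    hdense.equalizer (map_continuous _) (map_continuous _)
      (funext fun k => congr_fun (h (k+1)) (Fin.last k))

theorem eventually_disjoint_proj_image (htdense : Set.Icc (0:ℝ) 1 ⊆ closure (Set.range t))
    {K₁ K₂ : Set Cz} (hK₁ : IsCompact K₁) (hK₂ : IsCompact K₂)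
    (hdisj : Disjoint K₁ K₂) :
    ∀ᶠ n in atTop, Disjoint (proj t ht n '' K₁) (proj t ht n '' K₂) := by
  set E : ℕ → Set (Cz × Cz) := fun n => {p | proj t ht n p.1 = proj t ht n p.2}
  have hE_closed : ∀ n, IsClosed (E n) := fun n =>
    isClosed_eq ((continuous_proj ht n).comp continuous_fst)
      ((continuous_proj ht n).comp continuous_snd)
  have hE_anti : Antitone E := fun m n hmn p hp => funext fun i => by
    simpa [proj] using congr_fun hp (Fin.castLE hmn i)
  have hE_inter : K₁ ×ˢ K₂ ∩ ⋂ n, E n = ∅ := by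
    refine eq_empty_of_forall_notMem fun p ⟨⟨hp₁, hp₂⟩, hpE⟩ => ?_
    have hp : p.1 = p.2 := eq_of_forall_proj_eq ht htdense (mem_iInter.1 hpE)
    exact disjoint_left.1 hdisj hp₁ (hp ▸ hp₂)
  obtain ⟨N, hN⟩ := (hK₁.prod hK₂).elim_directed_family_closed E hE_closed hE_inter
    hE_anti.directed_ge
  filter_upwards [eventually_ge_atTop N] with n hn
  refine disjoint_left.2 ?_
  rintro _ ⟨x, hx, rfl⟩ ⟨y, hy, hxy⟩
  exact (eq_empty_iff_forall_notMem.1 hN) (x, y) ⟨⟨hx, hy⟩, hE_anti hn hxy.symm⟩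

end Projections

theorem iInf_eq_iInf_add_iInf_of_eventually {a b c : ℕ → ℝ≥0∞} (ha : Antitone a)
    (hb : Antitone b) (hc : Antitone c) (h : ∀ᶠ n in atTop, c n = a n + b n) :
    ⨅ n, c n = (⨅ n, a n) + ⨅ n, b n := by
  obtain ⟨N, hN⟩ := eventually_atTop.1 h
  rw [← ha.iInf_nat_add N, ← hb.iInf_nat_add N, ← hc.iInf_nat_add N,
    ENNReal.iInf_add_iInf (f := fun n => a (n + N)) (g := fun n => b (n + N)) fun i j =>
      ⟨max i j, add_le_add (ha (by omega)) (hb (by omega))⟩]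
  exact iInf_congr fun n => hN _ (Nat.le_add_left N n)

/-- `φ` is additive on disjoint compact sets. -/
theorem stmt4 (t : ℕ → ℝ) (ht : ∀ k, t k ∈ Set.Ioc (0:ℝ) 1)
    (htinj : Function.Injective t)
    (htdense : Set.Icc (0:ℝ) 1 ⊆ closure (Set.range t))
    (K₁ K₂ : Set Cz) (hK₁ : IsCompact K₁) (hK₂ : IsCompact K₂)
    (hdisj : Disjoint K₁ K₂) :
    phi t ht (K₁ ∪ K₂) = phi t ht K₁ + phi t ht K₂ := by
  have hsplit : ∀ᶠ n in atTop, gauss n (covM t n) (proj t ht n '' (K₁ ∪ K₂)) =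
      gauss n (covM t n) (proj t ht n '' K₁) + gauss n (covM t n) (proj t ht n '' K₂) :=
    (eventually_disjoint_proj_image ht htdense hK₁ hK₂ hdisj).mono fun n hn => by
      rw [image_union, measure_union hn (hK₂.image (continuous_proj ht n)).measurableSet]
  simp only [phi_eq_iInf ht htinj]
  exact iInf_eq_iInf_add_iInf_of_eventually (antitone_gauss_proj_image ht htinj _)
    (antitone_gauss_proj_image ht htinj _) (antitone_gauss_proj_image ht htinj _) hsplit

end
end

section
/- Let (K_m)_{m≥1} be a nondecreasing sequence of compact subsets of C and let K be a compact subset of C with ⋃_{m=1}^∞ K_m = K. Then φ(K_m) converges to φ(K) as m → ∞ (equivalently, sup_{m≥1} φ(K_m) = φ(K)). -/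
open MeasureTheory Matrix Set Filter Topology
open scoped ENNReal

noncomputable section

namespace Stmt10


variable {t : ℕ → ℝ}

lemma indicator_mul_indicator_min (a b : ℝ) (s : ℝ) :
    (Set.Ioo (0:ℝ) a).indicator (1 : ℝ → ℝ) s * (Set.Ioo (0:ℝ) b).indicator (1 : ℝ → ℝ) s
      = (Set.Ioo (0:ℝ) (min a b)).indicator (1 : ℝ → ℝ) s := by
  have : Set.Ioo (0:ℝ) a ∩ Set.Ioo (0:ℝ) b = Set.Ioo (0:ℝ) (min a b) := by
    rw [Set.Ioo_inter_Ioo, max_self]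
  rw [← this]
  classical
  by_cases ha : s ∈ Set.Ioo (0:ℝ) a <;> by_cases hb : s ∈ Set.Ioo (0:ℝ) b <;>
    simp [Set.indicator_apply, ha, hb, Set.mem_inter_iff]

lemma integral_indicator_prod (a b : ℝ) (ha : 0 < a) (hb : 0 < b) :
    ∫ s : ℝ, (Set.Ioo (0:ℝ) a).indicator (1 : ℝ → ℝ) s *
      (Set.Ioo (0:ℝ) b).indicator (1 : ℝ → ℝ) s = min a b := by
  simp_rw [indicator_mul_indicator_min]
  rw [MeasureTheory.integral_indicator_one measurableSet_Ioo]
  simp [Real.volume_Ioo, le_min ha.le hb.le]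

lemma integrable_ind (a : ℝ) :
    Integrable ((Set.Ioo (0:ℝ) a).indicator (1 : ℝ → ℝ)) := by
  rw [integrable_indicator_iff measurableSet_Ioo]
  exact integrableOn_const measure_Ioo_lt_top.ne

lemma posDef_covM (ht : ∀ k, t k ∈ Set.Ioc (0:ℝ) 1) (htinj : Function.Injective t) (N : ℕ) :
    (covM t N).PosDef := by
  classical
  refine Matrix.PosDef.of_dotProduct_mulVec_pos ?_ ?_
  · ext i j
    simp [covM, Matrix.conjTranspose, min_comm]
  · intro x hx
    -- quadratic form equals ∫ g²
    set g : ℝ → ℝ := fun s => ∑ j : Fin N, x j * (Set.Ioo (0:ℝ) (t (j:ℕ))).indicator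
      (1 : ℝ → ℝ) s with hg
    have hgint : ∀ i j : Fin N, Integrable (fun s => (x i * (Set.Ioo (0:ℝ) (t (i:ℕ))).indicator
        (1 : ℝ → ℝ) s) * (x j * (Set.Ioo (0:ℝ) (t (j:ℕ))).indicator (1 : ℝ → ℝ) s)) := by
      intro i j
      have : (fun s => (x i * (Set.Ioo (0:ℝ) (t (i:ℕ))).indicator (1 : ℝ → ℝ) s) *
          (x j * (Set.Ioo (0:ℝ) (t (j:ℕ))).indicator (1 : ℝ → ℝ) s)) =
          fun s => (x i * x j) * (Set.Ioo (0:ℝ) (min (t (i:ℕ)) (t (j:ℕ)))).indicator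
            (1 : ℝ → ℝ) s := by
        funext s; rw [← indicator_mul_indicator_min]; ring
      rw [this]
      exact ((integrable_ind _).const_mul _)
    have hq : star x ⬝ᵥ (covM t N) *ᵥ x = ∫ s : ℝ, g s ^ 2 := by
      have : ∀ s, g s ^ 2 = ∑ i : Fin N, ∑ j : Fin N,
          (x i * (Set.Ioo (0:ℝ) (t (i:ℕ))).indicator (1 : ℝ → ℝ) s) *
          (x j * (Set.Ioo (0:ℝ) (t (j:ℕ))).indicator (1 : ℝ → ℝ) s) := by
        intro s
        rw [hg, sq, Finset.sum_mul_sum]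
      simp_rw [this]
      rw [integral_finset_sum _ (fun i _ => integrable_finset_sum _ (fun j _ => hgint i j))]
      simp_rw [fun i => integral_finset_sum Finset.univ (fun j (_ : j ∈ Finset.univ) => hgint i j)]
      have : ∀ i j : Fin N, ∫ s, (x i * (Set.Ioo (0:ℝ) (t (i:ℕ))).indicator (1 : ℝ → ℝ) s) *
          (x j * (Set.Ioo (0:ℝ) (t (j:ℕ))).indicator (1 : ℝ → ℝ) s)
          = x i * x j * min (t (i:ℕ)) (t (j:ℕ)) := by
        intro i j
        have hrw : (fun s => (x i * (Set.Ioo (0:ℝ) (t (i:ℕ))).indicator (1 : ℝ → ℝ) s) *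
            (x j * (Set.Ioo (0:ℝ) (t (j:ℕ))).indicator (1 : ℝ → ℝ) s)) =
            fun s => (x i * x j) * ((Set.Ioo (0:ℝ) (t (i:ℕ))).indicator (1 : ℝ → ℝ) s *
              (Set.Ioo (0:ℝ) (t (j:ℕ))).indicator (1 : ℝ → ℝ) s) := by
          funext s; ring
        rw [hrw, MeasureTheory.integral_const_mul, integral_indicator_prod _ _ (ht _).1 (ht _).1]
      simp_rw [this]
      simp only [dotProduct, Matrix.mulVec, covM, Matrix.of_apply, Finset.mul_sum,
        star_trivial]
      exact Finset.sum_congr rfl fun i _ => Finset.sum_congr rfl fun j _ => by ring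
    rw [hq]
    have hgi2 : Integrable (fun s => g s ^ 2) := by
      have : (fun s => g s ^ 2) = fun s => ∑ i : Fin N, ∑ j : Fin N,
          (x i * (Set.Ioo (0:ℝ) (t (i:ℕ))).indicator (1 : ℝ → ℝ) s) *
          (x j * (Set.Ioo (0:ℝ) (t (j:ℕ))).indicator (1 : ℝ → ℝ) s) := by
        funext s; rw [hg, sq, Finset.sum_mul_sum]
      rw [this]
      exact integrable_finset_sum _ (fun i _ => integrable_finset_sum _ (fun j _ => hgint i j))
    have h0 : 0 ≤ ∫ s : ℝ, g s ^ 2 := integral_nonneg (fun s => sq_nonneg _)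
    refine lt_of_le_of_ne h0 (fun heq => ?_)
    have hgz : ∀ᵐ s : ℝ, g s = 0 := by
      have := (integral_eq_zero_iff_of_nonneg (fun s => sq_nonneg (g s)) hgi2).1 heq.symm
      filter_upwards [this] with s hs
      exact pow_eq_zero_iff (n := 2) (by norm_num) |>.1 hs
    -- pick i with x i ≠ 0
    obtain ⟨i, hxi⟩ := Function.ne_iff.1 hx
    simp only [Pi.zero_apply] at hxi
    classical
    set P : Fin N → Prop := fun j => t (i:ℕ) < t (j:ℕ) with hP
    set η : ℝ := Finset.univ.inf' (⟨i, Finset.mem_univ i⟩ : (Finset.univ : Finset (Fin N)).Nonempty)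
      (fun j => if j = i then t (i:ℕ) else |t (j:ℕ) - t (i:ℕ)|) with hη
    have hηpos : 0 < η := by
      rw [hη]; apply (Finset.lt_inf'_iff ..).2
      intro j _
      by_cases hji : j = i
      · simp [hji, (ht (i:ℕ)).1]
      · simp only [hji, if_false]
        rw [abs_pos, sub_ne_zero]
        exact fun h => hji (Fin.val_injective (htinj h))
    have hηi : η ≤ t (i:ℕ) := by
      have h := Finset.inf'_le (b := i)
        (fun j => if j = i then t (i:ℕ) else |t (j:ℕ) - t (i:ℕ)|) (Finset.mem_univ i)
      rw [if_pos rfl] at h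
      exact h
    have hfar : ∀ j : Fin N, j ≠ i → η ≤ |t (j:ℕ) - t (i:ℕ)| := by
      intro j hji
      have h := Finset.inf'_le (b := j)
        (fun j => if j = i then t (i:ℕ) else |t (j:ℕ) - t (i:ℕ)|) (Finset.mem_univ j)
      rw [if_neg hji] at h
      exact h
    -- membership characterizations
    have hmem1 : ∀ s ∈ Set.Ioo (t (i:ℕ) - η) (t (i:ℕ)), ∀ j : Fin N,
        (s ∈ Set.Ioo (0:ℝ) (t (j:ℕ))) ↔ (j = i ∨ P j) := by
      rintro s ⟨hs1, hs2⟩ j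
      constructor
      · rintro ⟨-, hsj⟩
        by_contra hcon
        push_neg at hcon
        obtain ⟨hji, hPj⟩ := hcon
        have hne : t (j:ℕ) ≠ t (i:ℕ) := fun h => hji (Fin.val_injective (htinj h))
        have hlt : t (j:ℕ) < t (i:ℕ) := lt_of_le_of_ne (not_lt.1 hPj) hne
        have h3 := hfar j hji
        rw [abs_of_neg (by linarith : t (j:ℕ) - t (i:ℕ) < 0)] at h3
        linarith
      · rintro (rfl | hPj)
        · exact ⟨by linarith, hs2⟩
        · have : η ≤ t (j:ℕ) - t (i:ℕ) := by
            have := hfar j (fun h => absurd (h ▸ hPj) (lt_irrefl _))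
            rwa [abs_of_pos (by rw [hP] at hPj; linarith)] at this
          refine ⟨by linarith, by linarith⟩
    have hmem2 : ∀ s ∈ Set.Ioo (t (i:ℕ)) (t (i:ℕ) + η), ∀ j : Fin N,
        (s ∈ Set.Ioo (0:ℝ) (t (j:ℕ))) ↔ P j := by
      rintro s ⟨hs1, hs2⟩ j
      have hti : (0:ℝ) < t (i:ℕ) := (ht _).1
      constructor
      · rintro ⟨-, hsj⟩
        by_contra hPj
        by_cases hji : j = i
        · subst hji; linarith
        · have hne : t (j:ℕ) ≠ t (i:ℕ) := fun h => hji (Fin.val_injective (htinj h))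
          have hlt : t (j:ℕ) < t (i:ℕ) := lt_of_le_of_ne (not_lt.1 hPj) hne
          linarith
      · intro hPj
        have hji : j ≠ i := fun h => absurd (h ▸ hPj) (lt_irrefl _)
        have : η ≤ t (j:ℕ) - t (i:ℕ) := by
          have := hfar j hji
          rwa [abs_of_pos (by rw [hP] at hPj; linarith)] at this
        exact ⟨by linarith, by linarith⟩
    -- value of g on the two intervals
    have hval1 : ∀ s ∈ Set.Ioo (t (i:ℕ) - η) (t (i:ℕ)),
        g s = x i + ∑ j ∈ Finset.univ.erase i, (if P j then x j else 0) := by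
      intro s hs
      rw [hg]
      have : ∀ j : Fin N, x j * (Set.Ioo (0:ℝ) (t (j:ℕ))).indicator (1 : ℝ → ℝ) s
          = if (j = i ∨ P j) then x j else 0 := by
        intro j
        by_cases h : j = i ∨ P j
        · rw [if_pos h, Set.indicator_of_mem ((hmem1 s hs j).2 h)]; simp
        · rw [if_neg h, Set.indicator_of_notMem (fun hm => h ((hmem1 s hs j).1 hm))]; simp
      simp_rw [this]
      rw [← Finset.add_sum_erase _ _ (Finset.mem_univ i)]
      congr 1
      · simp
      · refine Finset.sum_congr rfl (fun j hj => ?_)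
        have hji : j ≠ i := (Finset.mem_erase.1 hj).1
        simp [hji]
    have hval2 : ∀ s ∈ Set.Ioo (t (i:ℕ)) (t (i:ℕ) + η),
        g s = ∑ j ∈ Finset.univ.erase i, (if P j then x j else 0) := by
      intro s hs
      rw [hg]
      have : ∀ j : Fin N, x j * (Set.Ioo (0:ℝ) (t (j:ℕ))).indicator (1 : ℝ → ℝ) s
          = if P j then x j else 0 := by
        intro j
        by_cases h : P j
        · rw [if_pos h, Set.indicator_of_mem ((hmem2 s hs j).2 h)]; simp
        · rw [if_neg h, Set.indicator_of_notMem (fun hm => h ((hmem2 s hs j).1 hm))]; simp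
      simp_rw [this]
      rw [← Finset.add_sum_erase _ _ (Finset.mem_univ i)]
      have : ¬ P i := lt_irrefl _
      simp [this]
    -- find zeros of g in each interval
    have hzero : ∀ (I : Set ℝ), MeasurableSet I → volume I ≠ 0 → ∃ s ∈ I, g s = 0 := by
      intro I hIm hI
      by_contra hcon
      push_neg at hcon
      have hsub : I ⊆ {s | g s ≠ 0} := fun s hs => hcon s hs
      have : volume I ≤ volume {s | g s ≠ 0} := measure_mono hsub
      rw [ae_iff] at hgz
      exact hI (le_antisymm (le_trans this (le_of_eq hgz)) zero_le)
    obtain ⟨s₁, hs₁, hgs₁⟩ := hzero (Set.Ioo (t (i:ℕ) - η) (t (i:ℕ))) measurableSet_Ioo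
      (by rw [Real.volume_Ioo]; simp; linarith)
    obtain ⟨s₂, hs₂, hgs₂⟩ := hzero (Set.Ioo (t (i:ℕ)) (t (i:ℕ) + η)) measurableSet_Ioo
      (by rw [Real.volume_Ioo]; simp; linarith)
    have := hval1 s₁ hs₁
    rw [hgs₁] at this
    have h2 := hval2 s₂ hs₂
    rw [hgs₂] at h2
    exact hxi (by linarith)



variable {t : ℕ → ℝ}



/-- the bottom-right entry of the inverse -/
def aa (t : ℕ → ℝ) (N : ℕ) : ℝ := (covM t (N+1))⁻¹ (Fin.last N) (Fin.last N)

/-- last column of the inverse (first N entries) -/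
def ww (t : ℕ → ℝ) (N : ℕ) : Fin N → ℝ :=
  fun k => (covM t (N+1))⁻¹ k.castSucc (Fin.last N)

section Matrices

variable (ht : ∀ k, t k ∈ Set.Ioc (0:ℝ) 1) (htinj : Function.Injective t) (N : ℕ)

-- abbreviations
local notation "M" => covM t (N+1)
local notation "A" => covM t N
local notation "W" => (covM t (N+1))⁻¹

omit ht in
lemma covM_symm_transpose (n : ℕ) : (covM t n)ᵀ = covM t n := by
  ext i j; simp [covM, Matrix.transpose_apply, min_comm]

lemma W_symm : Wᵀ = W := by
  have h := Matrix.transpose_nonsing_inv (covM t (N+1))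
  rwa [covM_symm_transpose] at h

include ht htinj

lemma W_posDef : ((covM t (N+1))⁻¹).PosDef :=
  Matrix.posDef_inv_iff.2 (posDef_covM ht htinj (N+1))

lemma aa_pos : 0 < aa t N := by
  have h := (W_posDef ht htinj N).dotProduct_mulVec_pos (x := Pi.single (Fin.last N) (1:ℝ)) (by
    intro h
    have := congrFun h (Fin.last N)
    simp [Pi.single_eq_same] at this)
  simpa [single_dotProduct, Matrix.mulVec_single, aa] using h

lemma detM_pos : 0 < (covM t (N+1)).det := (posDef_covM ht htinj (N+1)).det_pos

lemma detA_pos : 0 < (covM t N).det := (posDef_covM ht htinj N).det_pos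

lemma hMW : M * W = 1 :=
  Matrix.mul_nonsing_inv _ (isUnit_iff_ne_zero.2 (detM_pos ht htinj N).ne')

omit ht htinj in
lemma entry_eq (i k : Fin N) : covM t N i k = M i.castSucc k.castSucc := by
  simp [covM]

omit ht htinj in
lemma submatrix_covM : (covM t (N+1)).submatrix Fin.castSucc Fin.castSucc = covM t N := by
  ext i j; simp [covM]

/-- Schur-type identity: the inverse of the principal block. -/
lemma A_inv_eq : (covM t N)⁻¹ =
    Matrix.of (fun i j => W i.castSucc j.castSucc - ww t N i * ww t N j / aa t N) := by
  have ha := aa_pos ht htinj N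
  refine Matrix.inv_eq_right_inv ?_
  ext i j
  have hMW' := hMW ht htinj N
  -- entry equations
  have e1 : ∀ (i' : Fin (N+1)) (j' : Fin (N+1)),
      ∑ k : Fin (N+1), M i' k * W k j' = (1 : Matrix (Fin (N+1)) (Fin (N+1)) ℝ) i' j' := by
    intro i' j'
    have := congrFun (congrFun hMW' i') j'
    simpa [Matrix.mul_apply] using this
  have hWs : ∀ p q : Fin (N+1), W p q = W q p := by
    intro p q
    have := congrFun (congrFun (W_symm (t := t) N) q) p
    simpa using this
  -- row i of M * W at column j (castSucc) and at column last
  have h1 : ∑ k : Fin N, M i.castSucc k.castSucc * W k.castSucc j.castSucc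
      + M i.castSucc (Fin.last N) * W (Fin.last N) j.castSucc
      = (if i = j then (1:ℝ) else 0) := by
    have := e1 i.castSucc j.castSucc
    rw [Fin.sum_univ_castSucc] at this
    rw [this, Matrix.one_apply]
    simp [Fin.castSucc_inj]
  have h2 : ∑ k : Fin N, M i.castSucc k.castSucc * W k.castSucc (Fin.last N)
      + M i.castSucc (Fin.last N) * aa t N = 0 := by
    have h := e1 i.castSucc (Fin.last N)
    rw [Fin.sum_univ_castSucc] at h
    rw [Matrix.one_apply_ne (Fin.castSucc_lt_last i).ne] at h
    exact h
  -- now compute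
  have hexp : (covM t N * Matrix.of (fun i j =>
      W i.castSucc j.castSucc - ww t N i * ww t N j / aa t N)) i j
      = (∑ k : Fin N, M i.castSucc k.castSucc * W k.castSucc j.castSucc)
        - (∑ k : Fin N, M i.castSucc k.castSucc * ww t N k) * ww t N j / aa t N := by
    simp only [Matrix.mul_apply, Matrix.of_apply, mul_sub, Finset.sum_sub_distrib]
    simp_rw [entry_eq (t := t) N]
    congr 1
    rw [Finset.sum_mul, Finset.sum_div]
    refine Finset.sum_congr rfl fun k _ => ?_
    ring
  rw [hexp]
  have hww : ∀ k : Fin N, W k.castSucc (Fin.last N) = ww t N k := fun k => rfl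
  have h2' : ∑ k : Fin N, M i.castSucc k.castSucc * ww t N k
      = - (M i.castSucc (Fin.last N) * aa t N) := by
    have h := h2
    simp_rw [hww] at h
    linarith
  have h1' : ∑ k : Fin N, M i.castSucc k.castSucc * W k.castSucc j.castSucc
      = (if i = j then (1:ℝ) else 0) - M i.castSucc (Fin.last N) * W (Fin.last N) j.castSucc := by
    linarith [h1]
  rw [h1', h2']
  have : W (Fin.last N) j.castSucc = ww t N j := by rw [hWs]; rfl
  rw [this]
  field_simp
  rw [Matrix.one_apply]
  by_cases hij : i = j <;> simp [hij] <;> ring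

lemma det_identity : aa t N * (covM t (N+1)).det = (covM t N).det := by
  have hdM := detM_pos ht htinj N
  have : aa t N = ((covM t (N+1)).det)⁻¹ * (covM t N).det := by
    rw [aa, Matrix.inv_def]
    simp only [Matrix.smul_apply, smul_eq_mul, Ring.inverse_eq_inv]
    congr 1
    rw [Matrix.adjugate_fin_succ_eq_det_submatrix]
    simp only [Fin.succAbove_last]
    rw [submatrix_covM]
    have : ((Fin.last N : Fin (N+1)) : ℕ) + ((Fin.last N : Fin (N+1)) : ℕ) = 2 * N := by
      simp [Fin.val_last]; ring
    rw [this, pow_mul]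
    norm_num
  rw [this]
  field_simp

omit htinj ht in
lemma expand_quad {n : ℕ} (Q : Matrix (Fin n) (Fin n) ℝ) (v : Fin n → ℝ) :
    v ⬝ᵥ Q *ᵥ v = ∑ i : Fin n, v i * ∑ j : Fin n, Q i j * v j := by
  simp [dotProduct, Matrix.mulVec]

lemma quad_split (u : Fin N → ℝ) (s : ℝ) :
    (Fin.snoc u s : Fin (N+1) → ℝ) ⬝ᵥ W *ᵥ (Fin.snoc u s)
      = aa t N * (s + (∑ k, ww t N k * u k) / aa t N)^2 + u ⬝ᵥ (covM t N)⁻¹ *ᵥ u := by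
  have ha := aa_pos ht htinj N
  set r := ∑ k, ww t N k * u k with hr
  set Q0 := ∑ i : Fin N, u i * ∑ j : Fin N, W i.castSucc j.castSucc * u j with hQ0
  have hww : ∀ k : Fin N, W k.castSucc (Fin.last N) = ww t N k := fun _ => rfl
  have haa : W (Fin.last N) (Fin.last N) = aa t N := rfl
  have hWs : ∀ p q : Fin (N+1), W p q = W q p := by
    intro p q
    have := congrFun (congrFun (W_symm (t := t) N) q) p
    simpa using this
  have hw2 : ∀ k : Fin N, W (Fin.last N) k.castSucc = ww t N k := fun k => by
    rw [hWs]; rfl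
  -- RHS quadratic form
  have hQ : u ⬝ᵥ (covM t N)⁻¹ *ᵥ u = Q0 - r * r / aa t N := by
    rw [A_inv_eq ht htinj N, expand_quad]
    have hterm : ∀ i : Fin N, (∑ j : Fin N,
        (Matrix.of fun i j => W i.castSucc j.castSucc - ww t N i * ww t N j / aa t N) i j * u j)
        = (∑ j : Fin N, W i.castSucc j.castSucc * u j) - ww t N i * r / aa t N := by
      intro i
      simp only [Matrix.of_apply, sub_mul, Finset.sum_sub_distrib]
      congr 1
      rw [hr, Finset.mul_sum, Finset.sum_div]
      refine Finset.sum_congr rfl fun j _ => ?_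
      ring
    simp_rw [hterm, mul_sub, Finset.sum_sub_distrib]
    rw [← hQ0]
    congr 1
    rw [hr, Finset.sum_mul, Finset.sum_div]
    refine Finset.sum_congr rfl fun i _ => ?_
    ring
  -- LHS expansion
  rw [expand_quad, Fin.sum_univ_castSucc]
  simp only [Fin.snoc_castSucc, Fin.snoc_last]
  have hinner : ∀ i : Fin N, (∑ j : Fin (N+1), W i.castSucc j * (Fin.snoc u s : Fin (N+1) → ℝ) j)
      = (∑ j : Fin N, W i.castSucc j.castSucc * u j) + ww t N i * s := by
    intro i
    rw [Fin.sum_univ_castSucc]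
    simp only [Fin.snoc_castSucc, Fin.snoc_last, hww]
  have hlastrow : (∑ j : Fin (N+1), W (Fin.last N) j * (Fin.snoc u s : Fin (N+1) → ℝ) j)
      = r + aa t N * s := by
    rw [Fin.sum_univ_castSucc]
    simp only [Fin.snoc_castSucc, Fin.snoc_last, hw2, haa, hr]
  simp_rw [hinner, hlastrow]
  have hsum : ∑ i : Fin N, u i * ((∑ j : Fin N, W i.castSucc j.castSucc * u j) + ww t N i * s)
      = Q0 + r * s := by
    simp only [mul_add, Finset.sum_add_distrib]
    rw [← hQ0]
    congr 1
    rw [hr, Finset.sum_mul]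
    refine Finset.sum_congr rfl fun i _ => ?_
    ring
  rw [hsum, hQ]
  field_simp
  ring

/-- the normalizing constant -/
def cst (t : ℕ → ℝ) (N : ℕ) : ℝ := ((2 * Real.pi) ^ N * (covM t N).det) ^ (-(1:ℝ)/2 : ℝ)

lemma cst_pos (N' : ℕ) : 0 < cst t N' :=
  Real.rpow_pos_of_pos (mul_pos (pow_pos (by positivity) N')
    (posDef_covM ht htinj N').det_pos) _

lemma cst_step : cst t (N+1) * Real.sqrt (Real.pi / (aa t N / 2)) = cst t N := by
  have ha := aa_pos ht htinj N
  have hdM := detM_pos ht htinj N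
  have hdA := detA_pos ht htinj N
  have hπ : (0:ℝ) < 2 * Real.pi := by positivity
  have hbase : (2 * Real.pi) ^ N * (covM t N).det
      = ((2 * Real.pi) ^ (N+1) * (covM t (N+1)).det) * (aa t N / (2 * Real.pi)) := by
    have hdet := det_identity ht htinj N
    field_simp [pow_succ]
    linear_combination (-(Real.pi * Real.pi ^ N * 2 ^ N * 2)) * hdet
  have hsqrt : Real.sqrt (Real.pi / (aa t N / 2)) = (aa t N / (2 * Real.pi)) ^ (-(1:ℝ)/2 : ℝ) := by
    have h1 : Real.pi / (aa t N / 2) = 2 * Real.pi / aa t N := by ring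
    rw [h1, Real.sqrt_eq_rpow]
    rw [show (-(1:ℝ)/2 : ℝ) = -(1/2 : ℝ) by norm_num]
    rw [Real.rpow_neg (by positivity)]
    rw [← Real.inv_rpow (by positivity)]
    congr 1
    field_simp
  rw [cst, cst, hsqrt, hbase, ← Real.mul_rpow (by positivity) (by positivity)]

/-- the density -/
def gden (t : ℕ → ℝ) (N : ℕ) : (Fin N → ℝ) → ℝ :=
  fun u => cst t N * Real.exp (-(u ⬝ᵥ (covM t N)⁻¹ *ᵥ u) / 2)

omit ht htinj in
lemma gauss_eq_withDensity : gauss N (covM t N)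
    = volume.withDensity (fun u => ENNReal.ofReal (gden t N u)) := rfl

omit ht htinj in
lemma measurable_gden : Measurable fun u => ENNReal.ofReal (gden t N u) := by
  apply Measurable.ennreal_ofReal
  apply Measurable.const_mul
  apply Real.measurable_exp.comp
  apply Measurable.div_const
  apply Measurable.neg
  simp_rw [expand_quad]
  exact Finset.measurable_sum _ fun i _ => (measurable_pi_apply i).mul
    (Finset.measurable_sum _ fun j _ => (measurable_pi_apply j).const_mul _)

lemma gden_pos {N' : ℕ} (u : Fin N' → ℝ) : 0 < gden t N' u :=
  mul_pos (cst_pos ht htinj N') (Real.exp_pos _)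

/-- key 1D integral -/
lemma key_integral (u : Fin N → ℝ) :
    ∫⁻ s : ℝ, ENNReal.ofReal (gden t (N+1) (Fin.snoc u s)) = ENNReal.ofReal (gden t N u) := by
  have ha := aa_pos ht htinj N
  set r := (∑ k, ww t N k * u k) / aa t N with hrdef
  have hfun : ∀ s : ℝ, gden t (N+1) (Fin.snoc u s)
      = (cst t (N+1) * Real.exp (-(u ⬝ᵥ (covM t N)⁻¹ *ᵥ u) / 2)) *
        Real.exp (-(aa t N / 2) * (s + r)^2) := by
    intro s
    rw [gden, quad_split ht htinj N u s, ← hrdef]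
    rw [show (-(aa t N * (s + r) ^ 2 + u ⬝ᵥ (covM t N)⁻¹ *ᵥ u) / 2)
        = (-(aa t N / 2) * (s + r)^2) + (-(u ⬝ᵥ (covM t N)⁻¹ *ᵥ u) / 2) by ring]
    rw [Real.exp_add]
    ring
  simp_rw [hfun]
  have hInt : Integrable (fun s : ℝ => Real.exp (-(aa t N / 2) * (s + r)^2)) :=
    (integrable_exp_neg_mul_sq (by positivity)).comp_add_right r
  set C := cst t (N+1) * Real.exp (-(u ⬝ᵥ (covM t N)⁻¹ *ᵥ u) / 2) with hC
  have hCpos : 0 ≤ C := by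
    rw [hC]
    have : (0:ℝ) < cst t (N+1) := cst_pos ht htinj (N+1)
    positivity
  rw [← ofReal_integral_eq_lintegral_ofReal (hInt.const_mul C)
    (Filter.Eventually.of_forall fun s => by positivity)]
  congr 1
  rw [MeasureTheory.integral_const_mul]
  have : ∫ s : ℝ, Real.exp (-(aa t N / 2) * (s + r)^2)
      = ∫ s : ℝ, Real.exp (-(aa t N / 2) * s^2) := by
    exact integral_add_right_eq_self (fun y => Real.exp (-(aa t N / 2) * y^2)) r
  rw [this]
  rw [integral_gaussian]
  rw [gden, hC]
  rw [show C * Real.sqrt (Real.pi / (aa t N / 2))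
      = (cst t (N+1) * Real.sqrt (Real.pi / (aa t N / 2))) *
        Real.exp (-(u ⬝ᵥ (covM t N)⁻¹ *ᵥ u) / 2) by rw [hC]; ring]
  rw [cst_step ht htinj N]

theorem gauss_map_init :
    Measure.map (fun v : Fin (N+1) → ℝ => (fun i : Fin N => v i.castSucc))
      (gauss (N+1) (covM t (N+1))) = gauss N (covM t N) := by
  have hproj : Measurable fun (v : Fin (N+1) → ℝ) => (fun i : Fin N => v i.castSucc) :=
    measurable_pi_lambda _ fun i => measurable_pi_apply _
  refine Measure.ext fun B hB => ?_
  rw [Measure.map_apply hproj hB]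
  rw [gauss_eq_withDensity, gauss_eq_withDensity]
  rw [withDensity_apply _ (hproj hB), withDensity_apply _ hB]
  set e := MeasurableEquiv.piFinSuccAbove (fun _ : Fin (N+1) => ℝ) (Fin.last N) with he
  have hsymm : ∀ p : ℝ × (∀ j : Fin N, (fun _ : Fin (N+1) => ℝ) ((Fin.last N).succAbove j)),
      e.symm p = Fin.snoc p.2 p.1 := by
    rintro ⟨s, u⟩
    rw [he, MeasurableEquiv.piFinSuccAbove_symm_apply]
    exact Fin.insertNth_last' s u
  have hmp := (volume_preserving_piFinSuccAbove (fun _ : Fin (N+1) => ℝ) (Fin.last N)).symm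
  have hemb := (MeasurableEquiv.piFinSuccAbove
    (fun _ : Fin (N+1) => ℝ) (Fin.last N)).symm.measurableEmbedding
  rw [← MeasurePreserving.setLIntegral_comp_preimage_emb hmp hemb]
  have hset : (e.symm) ⁻¹' ((fun v : Fin (N+1) → ℝ => (fun i : Fin N => v i.castSucc)) ⁻¹' B)
      = Set.univ ×ˢ B := by
    ext p
    simp only [Set.mem_preimage, Set.mem_prod, Set.mem_univ, true_and]
    have : (fun i : Fin N => (e.symm p) i.castSucc) = p.2 := by
      funext i
      rw [hsymm]
      simp
    rw [this]
  rw [hset, Measure.volume_eq_prod, ← Measure.prod_restrict, Measure.restrict_univ]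
  have hfm : Measurable fun p : ℝ × (∀ j : Fin N, (fun _ : Fin (N+1) => ℝ)
      ((Fin.last N).succAbove j)) => ENNReal.ofReal (gden t (N+1) (e.symm p)) :=
    (measurable_gden (N := N+1)).comp e.symm.measurable
  rw [lintegral_prod _ hfm.aemeasurable]
  rw [lintegral_lintegral_swap hfm.aemeasurable]
  refine setLIntegral_congr_fun hB (fun u _ => ?_)
  have : ∀ s : ℝ, ENNReal.ofReal (gden t (N+1) (e.symm (s, u)))
      = ENNReal.ofReal (gden t (N+1) (Fin.snoc u s)) := fun s => by rw [hsymm]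
  simp_rw [this]
  exact key_integral ht htinj N u

end Matrices

section Finiteness

variable (ht : ∀ k, t k ∈ Set.Ioc (0:ℝ) 1) (htinj : Function.Injective t)

include ht htinj

lemma gauss_univ_lt_top (N : ℕ) : gauss (N+1) (covM t (N+1)) Set.univ < ⊤ := by
  induction N with
  | zero =>
    rw [gauss_eq_withDensity, withDensity_apply _ MeasurableSet.univ, Measure.restrict_univ]
    have hmp := (volume_preserving_funUnique (Fin 1) ℝ).symm
    have hW00 : (covM t 1)⁻¹ 0 0 = (t 0)⁻¹ := by
      rw [Matrix.inv_def, Matrix.adjugate_fin_one]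
      simp only [Matrix.smul_apply, Matrix.one_apply_eq, smul_eq_mul, mul_one,
        Ring.inverse_eq_inv]
      congr 1
      rw [Matrix.det_fin_one]
      simp [covM]
    have h0 : (0:ℝ) < t 0 := (ht 0).1
    have key : ∀ x : ℝ, gden t 1 ((MeasurableEquiv.funUnique (Fin 1) ℝ).symm x)
        = cst t 1 * Real.exp (-((t 0)⁻¹/2) * x^2) := by
      intro x
      rw [gden]
      congr 2
      rw [expand_quad]
      rw [Fin.sum_univ_one, Fin.sum_univ_one, hW00]
      have : ((MeasurableEquiv.funUnique (Fin 1) ℝ).symm x) 0 = x := rfl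
      rw [this]
      ring
    show ∫⁻ (a : Fin 1 → ℝ), ENNReal.ofReal (gden t 1 a) < ⊤
    refine lt_of_eq_of_lt (MeasurePreserving.lintegral_comp hmp (measurable_gden (N := 1))).symm ?_
    calc ∫⁻ x : ℝ, ENNReal.ofReal (gden t 1 ((MeasurableEquiv.funUnique (Fin 1) ℝ).symm  x))
        = ∫⁻ x : ℝ, ENNReal.ofReal (cst t 1 * Real.exp (-((t 0)⁻¹/2) * x^2)) := by
          simp_rw [key]
      _ < ⊤ := by
          rw [← ofReal_integral_eq_lintegral_ofReal
            (((integrable_exp_neg_mul_sq (by positivity)).const_mul _))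
            (Filter.Eventually.of_forall fun x => by
              have := cst_pos ht htinj 1
              positivity)]
          exact ENNReal.ofReal_lt_top
  | succ n ih =>
    have hproj : Measurable fun (v : Fin (n+2) → ℝ) => (fun i : Fin (n+1) => v i.castSucc) :=
      measurable_pi_lambda _ fun i => measurable_pi_apply _
    have := gauss_map_init ht htinj (n+1)
    calc gauss (n+2) (covM t (n+2)) Set.univ
        = (Measure.map (fun v : Fin (n+2) → ℝ => (fun i : Fin (n+1) => v i.castSucc))
            (gauss (n+2) (covM t (n+2)))) Set.univ := by
          rw [Measure.map_apply hproj MeasurableSet.univ]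
          simp
      _ = gauss (n+1) (covM t (n+1)) Set.univ := by rw [this]
      _ < ⊤ := ih

end Finiteness

section Embed

/-- compactification target for one coordinate -/
abbrev Itv : Type := Set.Icc (-1:ℝ) 1

/-- embedding of `ℝ` into `[-1,1]` -/
def emb (x : ℝ) : Itv :=
  ⟨x / (1 + |x|), by
    constructor
    · rw [le_div_iff₀ (by positivity)]
      have := neg_abs_le x
      have := abs_nonneg x
      nlinarith
    · rw [div_le_one (by positivity)]
      have := le_abs_self x
      linarith⟩

lemma continuous_emb : Continuous emb := by
  apply Continuous.subtype_mk
  exact continuous_id.div (continuous_const.add continuous_abs) (fun x => by positivity)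

lemma injective_emb : Function.Injective emb := by
  intro x y h
  rw [Subtype.ext_iff] at h
  simp only [emb] at h
  have hx : (0:ℝ) < 1 + |x| := by positivity
  have hy : (0:ℝ) < 1 + |y| := by positivity
  rw [div_eq_div_iff hx.ne' hy.ne'] at h
  have habs : |x| * (1 + |y|) = |y| * (1 + |x|) := by
    have h2 := congrArg abs h
    rwa [abs_mul, abs_mul, abs_of_pos hx, abs_of_pos hy] at h2
  have hxy : |x| = |y| := by nlinarith
  rw [hxy] at h
  exact mul_right_cancel₀ hy.ne' h

/-- the compact metrizable product space -/
abbrev Ysp : Type := ℕ → Itv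

/-- projections of `Ysp` to finite products -/
def pY (N : ℕ) : Ysp → (Fin N → Itv) := fun y i => y (i : ℕ)

lemma continuous_pY (N : ℕ) : Continuous (pY N) :=
  continuous_pi fun i => continuous_apply _

/-- coordinatewise embedding of finite products -/
def embN (N : ℕ) : (Fin N → ℝ) → (Fin N → Itv) := fun u i => emb (u i)

lemma continuous_embN (N : ℕ) : Continuous (embN N) :=
  continuous_pi fun i => continuous_emb.comp (continuous_apply i)

lemma injective_embN (N : ℕ) : Function.Injective (embN N) := by
  intro u v h
  funext i
  exact injective_emb (congrFun h i)

end Embed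

section Co

variable (ht : ∀ k, t k ∈ Set.Ioc (0:ℝ) 1) (htinj : Function.Injective t)

/-- the transported Gaussian measures on the compact finite products -/
def nub (t : ℕ → ℝ) (N : ℕ) : Measure (Fin N → Itv) :=
  Measure.map (embN N) (gauss N (covM t N))

include ht htinj

lemma nub_univ_lt_top (N : ℕ) : nub t (N+1) Set.univ < ⊤ := by
  rw [nub, Measure.map_apply (continuous_embN _).measurable MeasurableSet.univ]
  exact lt_of_le_of_lt (measure_mono (Set.subset_univ _)) (gauss_univ_lt_top ht htinj N)

lemma nub_consistent (N : ℕ) :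
    Measure.map (fun y : Fin (N+2) → Itv => (fun i : Fin (N+1) => y i.castSucc))
      (nub t (N+2)) = nub t (N+1) := by
  rw [nub, nub]
  rw [Measure.map_map (measurable_pi_lambda _ fun i => measurable_pi_apply _)
    (continuous_embN _).measurable]
  rw [← gauss_map_init ht htinj (N+1)]
  rw [Measure.map_map (continuous_embN _).measurable
    (measurable_pi_lambda _ fun i => measurable_pi_apply _)]
  rfl

/-- the basic quantity: measure of the `N+1`-dimensional projection -/
def bar (t : ℕ → ℝ) (N : ℕ) (Q : Set Ysp) : ℝ≥0∞ := nub t (N+1) (pY (N+1) '' Q)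

lemma bar_lt_top (N : ℕ) (Q : Set Ysp) : bar t N Q < ⊤ :=
  lt_of_le_of_lt (measure_mono (Set.subset_univ _)) (nub_univ_lt_top ht htinj N)

omit ht htinj in
lemma pY_comp (N : ℕ) (y : Ysp) :
    (fun i : Fin (N+1) => (pY (N+2) y) i.castSucc) = pY (N+1) y := by
  funext i
  simp [pY]

lemma bar_antitone {Q : Set Ysp} (hQ : IsCompact Q) : Antitone (fun N => bar t N Q) := by
  apply antitone_nat_of_succ_le
  intro N
  have himg : IsCompact (pY (N+1) '' Q) := hQ.image (continuous_pY _)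
  have hmeas : MeasurableSet (pY (N+1) '' Q) := himg.isClosed.measurableSet
  calc bar t (N+1) Q
      ≤ nub t (N+2) ((fun y : Fin (N+2) → Itv => (fun i : Fin (N+1) => y i.castSucc)) ⁻¹'
          (pY (N+1) '' Q)) := by
        apply measure_mono
        rintro q ⟨y, hy, rfl⟩
        exact ⟨y, hy, pY_comp N y⟩
    _ = nub t (N+1) (pY (N+1) '' Q) := by
        rw [← Measure.map_apply (μ := nub t (N+2))
          (f := fun y : Fin (N+2) → Itv => fun i : Fin (N+1) => y i.castSucc)
          (measurable_pi_lambda _ fun i => measurable_pi_apply _) hmeas,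
          nub_consistent ht htinj N]

lemma bar_tendsto {Q : Set Ysp} (hQ : IsCompact Q) :
    Tendsto (fun N => bar t N Q) atTop (𝓝 (⨅ N, bar t N Q)) :=
  tendsto_atTop_iInf (bar_antitone ht htinj hQ)

/-- disjoint compact sets have disjoint projections, eventually -/
lemma eventually_disjoint {Q Q' : Set Ysp} (hQ : IsCompact Q) (hQ' : IsCompact Q')
    (hd : Disjoint Q Q') :
    ∃ N₀ : ℕ, ∀ N ≥ N₀, Disjoint (pY (N+1) '' Q) (pY (N+1) '' Q') := by
  by_contra hcon
  push_neg at hcon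
  -- the sets of pairs agreeing on the first N coordinates
  set T : ℕ → Set (Ysp × Ysp) := fun N =>
    (Q ×ˢ Q') ∩ {p : Ysp × Ysp | ∀ i : Fin (N+1), p.1 (i:ℕ) = p.2 (i:ℕ)} with hT
  have hTclosed : ∀ N, IsClosed (T N) := by
    intro N
    apply IsClosed.inter (hQ.isClosed.prod hQ'.isClosed)
    have : {p : Ysp × Ysp | ∀ i : Fin (N+1), p.1 (i:ℕ) = p.2 (i:ℕ)}
        = ⋂ i : Fin (N+1), {p : Ysp × Ysp | p.1 (i:ℕ) = p.2 (i:ℕ)} := by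
      ext p; simp
    rw [this]
    exact isClosed_iInter fun i => isClosed_eq
      ((continuous_apply _).comp continuous_fst) ((continuous_apply _).comp continuous_snd)
  have hTne : ∀ N, (T N).Nonempty := by
    intro N
    obtain ⟨N', hN', hndis⟩ := hcon N
    rw [Set.not_disjoint_iff] at hndis
    obtain ⟨q, ⟨y, hy, rfl⟩, ⟨z, hz, hqz⟩⟩ := hndis
    refine ⟨(y, z), ⟨hy, hz⟩, fun i => ?_⟩
    have hle : (i:ℕ) < N' + 1 := lt_of_lt_of_le i.2 (by omega)
    have := congrFun hqz.symm ⟨(i:ℕ), hle⟩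
    exact this
  have hTanti : ∀ (i j : ℕ), i ≤ j → T j ⊆ T i := by
    intro i j hij p hp
    refine ⟨hp.1, fun k => hp.2 ⟨(k:ℕ), lt_of_lt_of_le k.2 (by omega)⟩⟩
  have hne := IsCompact.nonempty_iInter_of_directed_nonempty_isCompact_isClosed T
    (fun i j => ⟨max i j, hTanti i (max i j) (le_max_left _ _),
      hTanti j (max i j) (le_max_right _ _)⟩)
    hTne (fun N => (hTclosed N).isCompact) hTclosed
  obtain ⟨⟨y, z⟩, hyz⟩ := hne
  rw [Set.mem_iInter] at hyz
  have hyQ : y ∈ Q := (hyz 0).1.1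
  have hzQ : z ∈ Q' := (hyz 0).1.2
  have hyzeq : y = z := by
    funext k
    exact (hyz k).2 ⟨k, by omega⟩
  exact Set.not_disjoint_iff.2 ⟨y, hyQ, hyzeq ▸ hzQ⟩ hd

lemma iInf_bar_ne_top (Q : Set Ysp) : (⨅ N, bar t N Q) ≠ ⊤ :=
  (lt_of_le_of_lt (iInf_le _ 0) (bar_lt_top ht htinj 0 Q)).ne

lemma iInf_bar_union_le {Q Q' : Set Ysp} (hQ : IsCompact Q) (hQ' : IsCompact Q') :
    (⨅ N, bar t N (Q ∪ Q')) ≤ (⨅ N, bar t N Q) + (⨅ N, bar t N Q') := by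
  refine le_of_tendsto_of_tendsto' (bar_tendsto ht htinj (hQ.union hQ'))
    ((bar_tendsto ht htinj hQ).add (bar_tendsto ht htinj hQ'))
    (fun N => ?_)
  simp only [bar, Set.image_union]
  exact measure_union_le _ _

lemma iInf_bar_disjoint {Q Q' : Set Ysp} (hQ : IsCompact Q) (hQ' : IsCompact Q')
    (hd : Disjoint Q Q') :
    (⨅ N, bar t N (Q ∪ Q')) = (⨅ N, bar t N Q) + (⨅ N, bar t N Q') := by
  obtain ⟨N₀, hN₀⟩ := eventually_disjoint ht htinj hQ hQ' hd
  have hev : (fun N => bar t N (Q ∪ Q')) =ᶠ[atTop] (fun N => bar t N Q + bar t N Q') := by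
    rw [Filter.eventuallyEq_iff_exists_mem]
    refine ⟨Set.Ici N₀, Filter.Ici_mem_atTop N₀, fun N hN => ?_⟩
    simp only [bar, Set.image_union]
    rw [measure_union (hN₀ N hN) ((hQ'.image (continuous_pY _)).isClosed.measurableSet)]
  refine tendsto_nhds_unique (bar_tendsto ht htinj (hQ.union hQ')) ?_
  exact Filter.Tendsto.congr' hev.symm
    ((bar_tendsto ht htinj hQ).add (bar_tendsto ht htinj hQ'))

/-- the content on the compact space `Ysp` -/
def theContent : MeasureTheory.Content Ysp where
  toFun Q := (⨅ N, bar t N (Q : Set Ysp)).toNNReal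
  mono' K₁ K₂ h := ENNReal.toNNReal_mono (iInf_bar_ne_top ht htinj _)
    (iInf_mono fun N => measure_mono (Set.image_mono h))
  sup_disjoint' K₁ K₂ hd _ _ := by
    have h : (⨅ N, bar t N ((K₁ : Set Ysp) ∪ (K₂ : Set Ysp)))
        = (⨅ N, bar t N (K₁ : Set Ysp)) + (⨅ N, bar t N (K₂ : Set Ysp)) :=
      iInf_bar_disjoint ht htinj K₁.2 K₂.2 hd
    rw [TopologicalSpace.Compacts.coe_sup, h,
      ENNReal.toNNReal_add (iInf_bar_ne_top ht htinj _) (iInf_bar_ne_top ht htinj _)]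
  sup_le' K₁ K₂ := by
    rw [TopologicalSpace.Compacts.coe_sup]
    have h := iInf_bar_union_le ht htinj K₁.2 K₂.2
    have := ENNReal.toNNReal_mono
      (by exact (ENNReal.add_lt_top.2 ⟨(iInf_bar_ne_top ht htinj _).lt_top,
        (iInf_bar_ne_top ht htinj _).lt_top⟩).ne) h
    rwa [ENNReal.toNNReal_add (iInf_bar_ne_top ht htinj _) (iInf_bar_ne_top ht htinj _)] at this

lemma theContent_apply (K : TopologicalSpace.Compacts Ysp) :
    (theContent ht htinj) K = ⨅ N, bar t N (K : Set Ysp) := by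
  change (((⨅ N, bar t N (K : Set Ysp)).toNNReal : ℝ≥0∞)) = _
  exact ENNReal.coe_toNNReal (iInf_bar_ne_top ht htinj _)

lemma nub_isFiniteMeasure (N : ℕ) : IsFiniteMeasure (nub t (N+1)) :=
  ⟨nub_univ_lt_top ht htinj N⟩

lemma theContent_regular : (theContent ht htinj).ContentRegular := by
  intro K
  refine le_antisymm ?_ ?_
  · refine le_iInf fun K' => le_iInf fun hK' => ?_
    exact (theContent ht htinj).mono _ _ (subset_trans hK' interior_subset)
  · refine ENNReal.le_of_forall_pos_le_add fun ε hε _ => ?_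
    have hεne : ((ε : ℝ≥0∞))/2 ≠ 0 :=
      (ENNReal.div_pos (ENNReal.coe_ne_zero.2 hε.ne') (by norm_num)).ne'
    -- choose a good level N₀
    have hfin := iInf_bar_ne_top ht htinj (K : Set Ysp)
    have hlt : (⨅ N, bar t N (K : Set Ysp))
        < (⨅ N, bar t N (K : Set Ysp)) + ε/2 := ENNReal.lt_add_right hfin hεne
    obtain ⟨N₀, hN₀⟩ := iInf_lt_iff.1 hlt
    -- outer regularity of nub at level N₀
    haveI : IsFiniteMeasure (nub t (N₀+1)) := nub_isFiniteMeasure ht htinj N₀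
    obtain ⟨U, hUsub, hUopen, hUlt⟩ := Set.exists_isOpen_lt_of_lt
      (pY (N₀+1) '' (K : Set Ysp)) _ (ENNReal.lt_add_right
        (bar_lt_top ht htinj N₀ (K : Set Ysp)).ne hεne)
    -- shrink
    obtain ⟨V, hVopen, hVsub, hVclos⟩ := normal_exists_closure_subset
      ((K.2.image (continuous_pY _)).isClosed) hUopen hUsub
    set K' : TopologicalSpace.Compacts Ysp :=
      ⟨pY (N₀+1) ⁻¹' (closure V), (IsClosed.preimage (continuous_pY _) isClosed_closure).isCompact⟩
      with hK'
    have hKint : (K : Set Ysp) ⊆ interior (K' : Set Ysp) := by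
      refine Set.Subset.trans ?_ (interior_maximal ?_ ((continuous_pY _).isOpen_preimage V hVopen))
      · intro y hy
        exact Set.mem_preimage.2 (hVsub ⟨y, hy, rfl⟩)
      · exact Set.preimage_mono subset_closure
    have hchain : (theContent ht htinj) K' ≤ (⨅ N, bar t N (K : Set Ysp)) + ε := by
      rw [theContent_apply]
      calc (⨅ N, bar t N (K' : Set Ysp)) ≤ bar t N₀ (K' : Set Ysp) := iInf_le _ _
        _ ≤ nub t (N₀+1) (closure V) := by
            apply measure_mono
            intro q hq
            obtain ⟨y, hy, rfl⟩ := hq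
            exact hy
        _ ≤ nub t (N₀+1) U := measure_mono hVclos
        _ ≤ bar t N₀ (K : Set Ysp) + ε/2 := hUlt.le
        _ ≤ ((⨅ N, bar t N (K : Set Ysp)) + ε/2) + ε/2 := by
            exact add_le_add_left hN₀.le _
        _ = (⨅ N, bar t N (K : Set Ysp)) + ε := by
            rw [add_assoc, ENNReal.add_halves]
    calc (⨅ (K'' : TopologicalSpace.Compacts Ysp)
            (_ : (K : Set Ysp) ⊆ interior (K'' : Set Ysp)), ((theContent ht htinj) K'' : ℝ≥0∞))
        ≤ (theContent ht htinj) K' := iInf₂_le K' hKint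
      _ ≤ (⨅ N, bar t N (K : Set Ysp)) + ε := hchain
      _ = (theContent ht htinj) K + ε := by rw [theContent_apply]

end Co


/-- the measure on the compactification -/
def muY (ht : ∀ k, t k ∈ Set.Ioc (0:ℝ) 1) (htinj : Function.Injective t) : Measure Ysp :=
  (theContent ht htinj).measure

lemma muY_compacts (ht : ∀ k, t k ∈ Set.Ioc (0:ℝ) 1) (htinj : Function.Injective t)
    (K : TopologicalSpace.Compacts Ysp) :
    muY ht htinj (K : Set Ysp) = ⨅ N, bar t N (K : Set Ysp) := by
  rw [muY, MeasureTheory.Content.measure_eq_content_of_regular _ (theContent_regular ht htinj) K,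
    theContent_apply]

end Stmt10

namespace Stmt10

variable {t : ℕ → ℝ}

/-- the embedding of `Cz` into the compactification -/
def piY (t : ℕ → ℝ) (ht : ∀ k, t k ∈ Set.Ioc (0:ℝ) 1) : Cz → Ysp :=
  fun x k => emb ((x : C(Set.Icc (0:ℝ) 1, ℝ)) ⟨t k, Set.Ioc_subset_Icc_self (ht k)⟩)

lemma continuous_proj (ht : ∀ k, t k ∈ Set.Ioc (0:ℝ) 1) (n : ℕ) :
    Continuous (proj t ht n) :=
  continuous_pi fun i =>
    (continuous_eval_const _).comp continuous_subtype_val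

lemma continuous_piY (t : ℕ → ℝ) (ht : ∀ k, t k ∈ Set.Ioc (0:ℝ) 1) :
    Continuous (piY t ht) :=
  continuous_pi fun k =>
    continuous_emb.comp ((continuous_eval_const _).comp continuous_subtype_val)

lemma phi_eq (ht : ∀ k, t k ∈ Set.Ioc (0:ℝ) 1) (htinj : Function.Injective t)
    (K : Set Cz) (hK : IsCompact K) :
    phi t ht K = ⨅ N, bar t N (piY t ht '' K) := by
  rw [phi]
  refine iInf_congr fun n => ?_
  have himg : pY (n+1) '' (piY t ht '' K) = embN (n+1) '' (proj t ht (n+1) '' K) := by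
    rw [← Set.image_comp, ← Set.image_comp]
    rfl
  have hS : IsCompact (proj t ht (n+1) '' K) := hK.image (continuous_proj ht (n+1))
  rw [bar, himg, nub, Measure.map_apply (continuous_embN _).measurable
      ((hS.image (continuous_embN _)).isClosed.measurableSet),
    Set.preimage_image_eq _ (injective_embN _)]

end Stmt10

open Stmt10

/-- if compact sets `K_m` increase with union the compact set
`K`, then `φ(K_m) → φ(K)`. -/
theorem stmt10 (t : ℕ → ℝ) (ht : ∀ k, t k ∈ Set.Ioc (0:ℝ) 1)
    (htinj : Function.Injective t)
    (htdense : Set.Icc (0:ℝ) 1 ⊆ closure (Set.range t))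
    (K : ℕ → Set Cz) (hK : ∀ m, IsCompact (K m)) (hmono : Monotone K)
    (L : Set Cz) (hL : IsCompact L) (hU : (⋃ m, K m) = L) :
    Tendsto (fun m => phi t ht (K m)) atTop (𝓝 (phi t ht L)) := by
  classical
  -- identify `phi` with the content measure on the compactification
  have hmono' : Monotone (fun m => piY t ht '' K m) :=
    fun a b hab => Set.image_mono (hmono hab)
  have key : ∀ (S : Set Cz), IsCompact S →
      phi t ht S = muY ht htinj (piY t ht '' S) := by
    intro S hS
    rw [phi_eq ht htinj S hS]
    have hc : IsCompact (piY t ht '' S) := hS.image (continuous_piY t ht)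
    rw [show piY t ht '' S
        = ((⟨piY t ht '' S, hc⟩ : TopologicalSpace.Compacts Ysp) : Set Ysp) from rfl]
    rw [muY_compacts ht htinj]
  have h1 : (fun m => phi t ht (K m)) = (fun m => muY ht htinj (piY t ht '' K m)) :=
    funext fun m => key (K m) (hK m)
  have h2 : phi t ht L = muY ht htinj (⋃ m, piY t ht '' K m) := by
    rw [← Set.image_iUnion, hU]
    exact key L hL
  rw [h1, h2]
  exact tendsto_measure_iUnion_atTop hmono'

end
end

section
/- Let (K_m)_{m≥1} be a nondecreasing sequence of compact subsets of C and let A = ⋃_{m=1}^∞ K_m. Then μ(A) = lim_{m→∞} φ(K_m) (equivalently, μ(A) = sup_{m≥1} φ(K_m)). -/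
open MeasureTheory Matrix Set Filter Topology
open scoped ENNReal

noncomputable section

namespace St11

/-! ### Matrix preliminaries -/

variable (t : ℕ → ℝ)

lemma covM_isSymm (n : ℕ) : (covM t n).IsHermitian := by
  ext i j
  simp [covM, min_comm]

variable {t} in
lemma covM_posDef (ht : ∀ k, t k ∈ Set.Ioc (0:ℝ) 1) (htinj : Function.Injective t)
    (n : ℕ) : (covM t n).PosDef := by
  refine Matrix.PosDef.of_dotProduct_mulVec_pos (covM_isSymm t n) fun x hx => ?_
  have htpos : ∀ k, 0 < t k := fun k => (ht k).1
  -- the indicator functions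
  set I : Fin n → Set ℝ := fun i => Set.Ioc (0:ℝ) (t (i:ℕ)) with hI
  have hImeas : ∀ i, MeasurableSet (I i) := fun i => measurableSet_Ioc
  set g : Fin n → ℝ → ℝ := fun i => (I i).indicator (fun _ => x i) with hg
  set F : ℝ → ℝ := fun s => (∑ i, g i s)^2 with hF
  set Fsum : ℝ → ℝ := fun s => ∑ i, ∑ j, ((I i ∩ I j).indicator (fun _ => x i * x j)) s
    with hFsum
  have hprod : ∀ (i j : Fin n) (s : ℝ),
      (I i ∩ I j).indicator (fun _ => x i * x j) s = g i s * g j s := by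
    intro i j s
    simpa using Set.inter_indicator_mul (s := I i) (t := I j) (fun _ => x i) (fun _ => x j) s
  have hFeq : F = Fsum := by
    funext s
    simp only [hF, hFsum, pow_two, Finset.sum_mul_sum]
    exact Finset.sum_congr rfl fun i _ => Finset.sum_congr rfl fun j _ => (hprod i j s).symm
  have hIinter : ∀ i j : Fin n, I i ∩ I j = Set.Ioc (0:ℝ) (min (t (i:ℕ)) (t (j:ℕ))) := by
    intro i j
    rw [hI, Set.Ioc_inter_Ioc, max_self]
  have hvol : ∀ i j : Fin n, volume (I i ∩ I j) = ENNReal.ofReal (min (t (i:ℕ)) (t (j:ℕ))) := by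
    intro i j
    rw [hIinter, Real.volume_Ioc, sub_zero]
  have hint : ∀ i j : Fin n, Integrable ((I i ∩ I j).indicator (fun _ => x i * x j)) := by
    intro i j
    refine MeasureTheory.IntegrableOn.integrable_indicator ?_ ((hImeas i).inter (hImeas j))
    refine MeasureTheory.integrableOn_const ?_ (by simp [ENNReal.mul_eq_top])
    rw [hvol]; exact ENNReal.ofReal_ne_top
  have hval : ∀ i j : Fin n, ∫ s, ((I i ∩ I j).indicator (fun _ => x i * x j)) s
      = x i * x j * min (t (i:ℕ)) (t (j:ℕ)) := by
    intro i j
    rw [MeasureTheory.integral_indicator_const _ ((hImeas i).inter (hImeas j)), measureReal_def, hvol,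
      ENNReal.toReal_ofReal (le_of_lt (lt_min (htpos _) (htpos _)))]
    rw [smul_eq_mul]; ring
  have hFsumInt : Integrable Fsum := by
    apply MeasureTheory.integrable_finset_sum
    intro i _
    exact MeasureTheory.integrable_finset_sum _ (fun j _ => hint i j)
  have hFint : Integrable F := by rw [hFeq]; exact hFsumInt
  have hquad : star x ⬝ᵥ (covM t n).mulVec x = ∫ s, F s := by
    rw [hFeq]
    rw [MeasureTheory.integral_finset_sum _ (fun i _ => MeasureTheory.integrable_finset_sum _
      (fun j _ => hint i j))]
    have : ∀ i : Fin n, ∫ s, (∑ j, ((I i ∩ I j).indicator (fun _ => x i * x j)) s)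
        = ∑ j, x i * x j * min (t (i:ℕ)) (t (j:ℕ)) := by
      intro i
      rw [MeasureTheory.integral_finset_sum _ (fun j _ => hint i j)]
      exact Finset.sum_congr rfl fun j _ => hval i j
    simp only [this]
    simp only [dotProduct, Matrix.mulVec, covM, Matrix.of_apply, star_trivial]
    refine Finset.sum_congr rfl fun i _ => ?_
    rw [Finset.mul_sum]
    refine Finset.sum_congr rfl fun j _ => ?_
    ring
  rw [hquad]
  -- find the maximal index in the support of x
  set S : Finset (Fin n) := Finset.univ.filter (fun i => x i ≠ 0) with hS
  have hSne : S.Nonempty := by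
    obtain ⟨i₀, hi₀⟩ := Function.ne_iff.1 hx
    exact ⟨i₀, by simp only [hS, Finset.mem_filter, Finset.mem_univ, true_and]; simpa using hi₀⟩
  obtain ⟨istar, histar, hmax⟩ := S.exists_max_image (fun i : Fin n => t (i:ℕ)) hSne
  have hxistar : x istar ≠ 0 := by
    have := histar; rw [hS, Finset.mem_filter] at this; exact this.2
  set E : Finset ℝ := insert (0:ℝ) ((S.erase istar).image (fun i : Fin n => t (i:ℕ))) with hE
  have hEne : E.Nonempty := ⟨0, by simp [hE]⟩
  set s0 : ℝ := E.max' hEne with hs0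
  have h0le : (0:ℝ) ≤ s0 := Finset.le_max' _ _ (by simp [hE])
  have hs0lt : s0 < t (istar:ℕ) := by
    rw [hs0, Finset.max'_lt_iff]
    intro b hb
    rw [hE, Finset.mem_insert] at hb
    rcases hb with rfl | hb
    · exact (ht _).1
    · obtain ⟨i, hi, rfl⟩ := Finset.mem_image.1 hb
      have hiS : i ∈ S := Finset.mem_of_mem_erase hi
      have hine : i ≠ istar := Finset.ne_of_mem_erase hi
      refine lt_of_le_of_ne (hmax i hiS) (fun h => hine ?_)
      exact Fin.ext (htinj h)
  have hble : ∀ b ∈ S, b ≠ istar → t (b:ℕ) ≤ s0 := by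
    intro b hb hbne
    exact Finset.le_max' _ _ (by
      rw [hE, Finset.mem_insert]
      exact Or.inr (Finset.mem_image.2 ⟨b, Finset.mem_erase.2 ⟨hbne, hb⟩, rfl⟩))
  set U : Set ℝ := Set.Ioc s0 (t (istar:ℕ)) with hU
  have hUmeas : MeasurableSet U := measurableSet_Ioc
  have hgU : ∀ s ∈ U, F s = (x istar)^2 := by
    intro s hs
    have hsum : (∑ i, g i s) = x istar := by
      rw [Finset.sum_eq_single istar]
      · have hmem : s ∈ I istar := ⟨lt_of_le_of_lt h0le hs.1, hs.2⟩
        simp [hg, Set.indicator_of_mem hmem]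
      · intro b _ hbne
        by_cases hxb : x b = 0
        · simp [hg, hxb, Set.indicator]
        · have hbS : b ∈ S := by simp [hS, hxb]
          have : s ∉ I b := by
            intro hmem
            exact absurd hmem.2 (not_le.2 (lt_of_le_of_lt (hble b hbS hbne) hs.1))
          simp [hg, Set.indicator_of_notMem this]
      · intro h; exact absurd (Finset.mem_univ istar) h
    rw [hF]; simp only; rw [hsum]
  have hintU : ∫ s in U, F s = (x istar)^2 * (t (istar:ℕ) - s0) := by
    rw [MeasureTheory.setIntegral_congr_fun hUmeas hgU, MeasureTheory.setIntegral_const, measureReal_def,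
      Real.volume_Ioc, ENNReal.toReal_ofReal (le_of_lt (sub_pos.2 hs0lt)), smul_eq_mul]
    ring
  have hpos : 0 < ∫ s in U, F s := by
    rw [hintU]
    have h1 : (0:ℝ) < (x istar)^2 := by
      have := pow_pos (abs_pos.2 hxistar) 2
      rwa [sq_abs] at this
    exact mul_pos h1 (sub_pos.2 hs0lt)
  refine lt_of_lt_of_le hpos ?_
  exact MeasureTheory.setIntegral_le_integral hFint
    (Filter.Eventually.of_forall (fun s => by rw [hF]; exact sq_nonneg _))

section Schur

variable (t : ℕ → ℝ) (ht : ∀ k, t k ∈ Set.Ioc (0:ℝ) 1) (htinj : Function.Injective t) (n : ℕ)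

/-- the cross-covariance vector -/
def cv : Fin n → ℝ := fun i => min (t (i : ℕ)) (t n)

/-- `w = A⁻¹ c` -/
def wv : Fin n → ℝ := (covM t n)⁻¹ *ᵥ (cv t n)

/-- Schur complement -/
def sc : ℝ := t n - cv t n ⬝ᵥ wv t n

variable {t n}

lemma covM_succ_cc (i j : Fin n) :
    covM t (n+1) i.castSucc j.castSucc = covM t n i j := by
  simp [covM]

lemma covM_succ_cl (i : Fin n) : covM t (n+1) i.castSucc (Fin.last n) = cv t n i := by
  simp [covM, cv]

lemma covM_succ_lc (j : Fin n) : covM t (n+1) (Fin.last n) j.castSucc = cv t n j := by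
  simp [covM, cv, min_comm]

lemma covM_succ_ll : covM t (n+1) (Fin.last n) (Fin.last n) = t n := by
  simp [covM]

variable (hA : (covM t n).PosDef) (hM' : (covM t (n+1)).PosDef)

section
include hA

lemma hAunit : IsUnit (covM t n).det := isUnit_iff_ne_zero.2 (ne_of_gt hA.det_pos)

lemma hAmul : covM t n * (covM t n)⁻¹ = 1 := Matrix.mul_nonsing_inv _ (hAunit hA)

lemma hAw : covM t n *ᵥ wv t n = cv t n := by
  rw [wv, Matrix.mulVec_mulVec, hAmul hA, Matrix.one_mulVec]

omit hA in
lemma hAinv_symm (i j : Fin n) : (covM t n)⁻¹ i j = (covM t n)⁻¹ j i := by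
  have h := (covM_isSymm t n).inv
  have := congrFun (congrFun h.eq j) i
  simpa [Matrix.conjTranspose_apply] using this

end

include hA hM' in
lemma sc_pos : 0 < sc t n := by
  classical
  set v : Fin (n+1) → ℝ := Fin.lastCases 1 (fun i => -(wv t n i)) with hv
  have hvlast : v (Fin.last n) = 1 := by rw [hv]; exact Fin.lastCases_last
  have hvcast : ∀ i : Fin n, v i.castSucc = -(wv t n i) := fun i => by
    rw [hv]; exact Fin.lastCases_castSucc i
  have hvne : v ≠ 0 := by
    intro h
    have := congrFun h (Fin.last n)
    rw [hvlast] at this; simp at this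
  have hMv : ∀ i : Fin n, (covM t (n+1) *ᵥ v) i.castSucc = 0 := by
    intro i
    rw [Matrix.mulVec, dotProduct, Fin.sum_univ_castSucc]
    simp only [hvcast, hvlast, covM_succ_cc, covM_succ_cl]
    have : ∑ j : Fin n, covM t n i j * -(wv t n j) = -((covM t n *ᵥ wv t n) i) := by
      rw [Matrix.mulVec, dotProduct, ← Finset.sum_neg_distrib]
      exact Finset.sum_congr rfl fun j _ => by ring
    rw [this, hAw hA, mul_one]
    ring
  have hMvlast : (covM t (n+1) *ᵥ v) (Fin.last n) = sc t n := by
    rw [Matrix.mulVec, dotProduct, Fin.sum_univ_castSucc]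
    simp only [hvcast, hvlast, covM_succ_lc, covM_succ_ll]
    have : ∑ j : Fin n, cv t n j * -(wv t n j) = -(cv t n ⬝ᵥ wv t n) := by
      rw [dotProduct, ← Finset.sum_neg_distrib]
      exact Finset.sum_congr rfl fun j _ => by ring
    rw [this, mul_one, sc]
    ring
  have hquad : star v ⬝ᵥ (covM t (n+1) *ᵥ v) = sc t n := by
    rw [dotProduct, Fin.sum_univ_castSucc]
    simp only [star_trivial, hMv, hMvlast, hvlast, mul_zero, Finset.sum_const_zero]
    ring
  have := hM'.dotProduct_mulVec_pos hvne
  rwa [hquad] at this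

include hA in
lemma det_succ : (covM t (n+1)).det = (covM t n).det * sc t n := by
  classical
  haveI : Invertible (covM t n) := Matrix.invertibleOfIsUnitDet _ (hAunit hA)
  set e : Fin n ⊕ Fin 1 ≃ Fin (n+1) := finSumFinEquiv with he
  have hsub : (covM t (n+1)).submatrix e e =
      Matrix.fromBlocks (covM t n) (Matrix.of fun i (_ : Fin 1) => cv t n i)
        (Matrix.of fun (_ : Fin 1) j => cv t n j) (Matrix.of fun _ _ => t n) := by
    ext i j
    rcases i with i | i <;> rcases j with j | j <;>
      simp [he, Matrix.submatrix_apply, covM, cv,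
        min_comm]
  have hdet : (covM t (n+1)).det = ((covM t (n+1)).submatrix e e).det :=
    (Matrix.det_submatrix_equiv_self e _).symm
  rw [hdet, hsub, Matrix.det_fromBlocks₁₁]
  congr 1
  rw [Matrix.det_fin_one]
  simp only [Matrix.sub_apply, Matrix.of_apply, Matrix.mul_apply]
  rw [Matrix.invOf_eq_nonsing_inv]
  rw [sc]
  congr 1
  rw [dotProduct]
  simp only [Finset.sum_mul, wv, Matrix.mulVec, dotProduct, Finset.mul_sum]
  rw [Finset.sum_comm]
  exact Finset.sum_congr rfl fun i _ => Finset.sum_congr rfl fun j _ => by ring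


/-- explicit inverse of `covM t (n+1)` in terms of blocks -/
def invQ (t : ℕ → ℝ) (n : ℕ) : Matrix (Fin (n+1)) (Fin (n+1)) ℝ :=
  Matrix.of fun i j =>
    Fin.lastCases
      (Fin.lastCases ((sc t n)⁻¹) (fun j' => -(wv t n j') / sc t n) j)
      (fun i' => Fin.lastCases (-(wv t n i') / sc t n)
          (fun j' => (covM t n)⁻¹ i' j' + wv t n i' * wv t n j' / sc t n) j)
      i

lemma invQ_cc (i j : Fin n) : invQ t n i.castSucc j.castSucc
    = (covM t n)⁻¹ i j + wv t n i * wv t n j / sc t n := by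
  simp [invQ]

lemma invQ_cl (i : Fin n) : invQ t n i.castSucc (Fin.last n) = -(wv t n i) / sc t n := by
  simp [invQ]

lemma invQ_lc (j : Fin n) : invQ t n (Fin.last n) j.castSucc = -(wv t n j) / sc t n := by
  simp [invQ]

lemma invQ_ll : invQ t n (Fin.last n) (Fin.last n) = (sc t n)⁻¹ := by
  simp [invQ]

include hA hM' in
lemma mul_invQ : covM t (n+1) * invQ t n = 1 := by
  classical
  have hs : 0 < sc t n := sc_pos hA hM'
  have hsne : sc t n ≠ 0 := ne_of_gt hs
  have hAwi : ∀ i : Fin n, ∑ k : Fin n, covM t n i k * wv t n k = cv t n i := by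
    intro i
    have : (covM t n *ᵥ wv t n) i = cv t n i := by rw [hAw hA]
    rw [← this]; rfl
  have hwj : ∀ j : Fin n, ∑ k : Fin n, cv t n k * (covM t n)⁻¹ k j = wv t n j := by
    intro j
    have : wv t n j = ∑ k : Fin n, (covM t n)⁻¹ j k * cv t n k := rfl
    rw [this]
    exact Finset.sum_congr rfl fun k _ => by rw [hAinv_symm (i := k) (j := j)]; ring
  ext i j
  rw [Matrix.mul_apply, Fin.sum_univ_castSucc]
  induction i using Fin.lastCases with
  | last =>
    induction j using Fin.lastCases with
    | last =>
      simp only [covM_succ_lc, covM_succ_ll, invQ_cl, invQ_ll]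
      have h1 : ∑ k : Fin n, cv t n k * (-(wv t n k) / sc t n)
          = -(cv t n ⬝ᵥ wv t n) / sc t n := by
        rw [Finset.sum_congr rfl (fun k _ => (by ring :
          cv t n k * (-(wv t n k) / sc t n) = -(cv t n k * wv t n k) / sc t n)),
          ← Finset.sum_div, Finset.sum_neg_distrib]
        rfl
      rw [h1, Matrix.one_apply_eq]
      have hsc : sc t n = t n - cv t n ⬝ᵥ wv t n := rfl
      rw [← div_eq_mul_inv, ← add_div,
        show -(cv t n ⬝ᵥ wv t n) + t n = sc t n from by rw [hsc]; ring, div_self hsne]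
    | cast j =>
      simp only [covM_succ_lc, covM_succ_ll, invQ_cc, invQ_lc]
      have hne : Fin.last n ≠ j.castSucc := (Fin.castSucc_lt_last j).ne'
      rw [Matrix.one_apply_ne hne]
      have h1 : ∑ k : Fin n, cv t n k * ((covM t n)⁻¹ k j + wv t n k * wv t n j / sc t n)
          = wv t n j + (cv t n ⬝ᵥ wv t n) * wv t n j / sc t n := by
        have : ∀ k : Fin n, cv t n k * ((covM t n)⁻¹ k j + wv t n k * wv t n j / sc t n)
            = cv t n k * (covM t n)⁻¹ k j + (cv t n k * wv t n k) * (wv t n j / sc t n) := by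
          intro k; ring
        rw [Finset.sum_congr rfl fun k _ => this k, Finset.sum_add_distrib, hwj j,
          ← Finset.sum_mul, dotProduct]
        ring
      rw [h1]
      have hsc : sc t n = t n - cv t n ⬝ᵥ wv t n := rfl
      field_simp
      linear_combination (wv t n j) * hsc
  | cast i =>
    induction j using Fin.lastCases with
    | last =>
      simp only [covM_succ_cc, covM_succ_cl, invQ_cl, invQ_ll]
      have hne : i.castSucc ≠ Fin.last n := (Fin.castSucc_lt_last i).ne
      rw [Matrix.one_apply_ne hne]
      have h1 : ∑ k : Fin n, covM t n i k * (-(wv t n k) / sc t n)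
          = -(cv t n i) / sc t n := by
        rw [Finset.sum_congr rfl (fun k _ => (by ring :
          covM t n i k * (-(wv t n k) / sc t n) = -(covM t n i k * wv t n k) / sc t n)),
          ← Finset.sum_div, Finset.sum_neg_distrib, hAwi i]
      rw [h1]
      field_simp
      ring
    | cast j =>
      simp only [covM_succ_cc, covM_succ_cl, invQ_cc, invQ_lc]
      have h1 : ∑ k : Fin n, covM t n i k * ((covM t n)⁻¹ k j + wv t n k * wv t n j / sc t n)
          = (covM t n * (covM t n)⁻¹) i j + cv t n i * (wv t n j / sc t n) := by
        have : ∀ k : Fin n, covM t n i k * ((covM t n)⁻¹ k j + wv t n k * wv t n j / sc t n)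
            = covM t n i k * (covM t n)⁻¹ k j + (covM t n i k * wv t n k) * (wv t n j / sc t n) := by
          intro k; ring
        rw [Finset.sum_congr rfl fun k _ => this k, Finset.sum_add_distrib,
          ← Finset.sum_mul, hAwi i, Matrix.mul_apply]
      rw [h1, hAmul hA]
      have : (1 : Matrix (Fin (n+1)) (Fin (n+1)) ℝ) i.castSucc j.castSucc
          = (1 : Matrix (Fin n) (Fin n) ℝ) i j := by
        by_cases h : i = j
        · subst h; rw [Matrix.one_apply_eq, Matrix.one_apply_eq]
        · rw [Matrix.one_apply_ne h, Matrix.one_apply_ne (fun hc => h (Fin.castSucc_inj.1 hc))]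
      rw [this]
      ring

include hA hM' in
lemma covM_succ_inv : (covM t (n+1))⁻¹ = invQ t n :=
  Matrix.inv_eq_right_inv (mul_invQ hA hM')

include hA hM' in
lemma quad_succ (v : Fin (n+1) → ℝ) :
    v ⬝ᵥ (covM t (n+1))⁻¹ *ᵥ v =
      (fun i => v i.castSucc) ⬝ᵥ (covM t n)⁻¹ *ᵥ (fun i => v i.castSucc)
        + (v (Fin.last n) - wv t n ⬝ᵥ (fun i => v i.castSucc))^2 / sc t n := by
  classical
  have hs : 0 < sc t n := sc_pos hA hM'
  have hsne : sc t n ≠ 0 := ne_of_gt hs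
  set u : Fin n → ℝ := fun i => v i.castSucc with hu
  set x : ℝ := v (Fin.last n) with hx
  set W : ℝ := wv t n ⬝ᵥ u with hW
  set P : ℝ := u ⬝ᵥ (covM t n)⁻¹ *ᵥ u with hP
  rw [covM_succ_inv hA hM']
  have hrow_cast : ∀ i : Fin n, (invQ t n *ᵥ v) i.castSucc
      = ((covM t n)⁻¹ *ᵥ u) i + wv t n i * W / sc t n - wv t n i * x / sc t n := by
    intro i
    rw [Matrix.mulVec, dotProduct, Fin.sum_univ_castSucc]
    simp only [invQ_cc, invQ_cl]
    have : ∀ j : Fin n, ((covM t n)⁻¹ i j + wv t n i * wv t n j / sc t n) * u j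
        = (covM t n)⁻¹ i j * u j + (wv t n i / sc t n) * (wv t n j * u j) := by
      intro j; ring
    rw [Finset.sum_congr rfl fun j _ => this j, Finset.sum_add_distrib, ← Finset.mul_sum]
    have h2 : ∑ j : Fin n, wv t n j * u j = W := by rw [hW]; rfl
    rw [h2]
    have h3 : ∑ j : Fin n, (covM t n)⁻¹ i j * u j = ((covM t n)⁻¹ *ᵥ u) i := rfl
    rw [h3]
    ring
  have hrow_last : (invQ t n *ᵥ v) (Fin.last n) = -(W) / sc t n + x / sc t n := by
    rw [Matrix.mulVec, dotProduct, Fin.sum_univ_castSucc]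
    simp only [invQ_lc, invQ_ll]
    have : ∀ j : Fin n, -(wv t n j) / sc t n * u j = -(wv t n j * u j) / sc t n := by
      intro j; ring
    rw [Finset.sum_congr rfl fun j _ => this j, ← Finset.sum_div, Finset.sum_neg_distrib]
    have h2 : ∑ j : Fin n, wv t n j * u j = W := by rw [hW]; rfl
    rw [h2]
    field_simp
    rfl
  rw [dotProduct, Fin.sum_univ_castSucc]
  have : ∀ i : Fin n, u i * (invQ t n *ᵥ v) i.castSucc
      = u i * ((covM t n)⁻¹ *ᵥ u) i + (wv t n i * u i) * (W / sc t n)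
        - (wv t n i * u i) * (x / sc t n) := by
    intro i; rw [hrow_cast i]; ring
  rw [Finset.sum_congr rfl fun i _ => this i, hrow_last]
  rw [Finset.sum_sub_distrib, Finset.sum_add_distrib, ← Finset.sum_mul, ← Finset.sum_mul]
  have h2 : ∑ i : Fin n, wv t n i * u i = W := by rw [hW]; rfl
  have h3 : ∑ i : Fin n, u i * ((covM t n)⁻¹ *ᵥ u) i = P := by rw [hP]; rfl
  rw [h2, h3]
  field_simp
  ring


omit hA hM' in
lemma measurable_quad {m : ℕ} (B : Matrix (Fin m) (Fin m) ℝ) :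
    Measurable fun u : Fin m → ℝ => u ⬝ᵥ B *ᵥ u := by
  simp only [dotProduct, Matrix.mulVec]
  apply Finset.measurable_sum
  intro i _
  exact (measurable_pi_apply i).mul
    (Finset.measurable_sum _ fun j _ => (measurable_pi_apply j).const_mul _)

omit hA hM' in
lemma measurable_gauss_density {m : ℕ} (M : Matrix (Fin m) (Fin m) ℝ) :
    Measurable fun u : Fin m → ℝ =>
      ENNReal.ofReal ((((2 * Real.pi) ^ m * M.det) ^ (-(1:ℝ)/2 : ℝ)) *
        Real.exp (-(u ⬝ᵥ M⁻¹.mulVec u) / 2)) := by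
  apply ENNReal.measurable_ofReal.comp
  exact (((measurable_quad M⁻¹).neg.div_const 2).exp).const_mul _

include hA hM' in
lemma gauss_map_dropL :
    Measure.map (fun v : Fin (n+1) → ℝ => v ∘ Fin.castSucc)
        (gauss (n+1) (covM t (n+1))) = gauss n (covM t n) := by
  classical
  have hs : 0 < sc t n := sc_pos hA hM'
  have hsne : sc t n ≠ 0 := ne_of_gt hs
  set w : Fin n → ℝ := wv t n with hw
  set c' : ℝ := ((2 * Real.pi) ^ (n+1) * (covM t (n+1)).det) ^ (-(1:ℝ)/2 : ℝ) with hc'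
  set c : ℝ := ((2 * Real.pi) ^ n * (covM t n).det) ^ (-(1:ℝ)/2 : ℝ) with hcc
  have hpi : (0:ℝ) < 2 * Real.pi := by positivity
  have hX : (0:ℝ) < (2 * Real.pi) ^ n * (covM t n).det :=
    mul_pos (pow_pos hpi n) hA.det_pos
  have hY : (0:ℝ) < 2 * Real.pi * sc t n := mul_pos hpi hs
  have hc'pos : 0 < c' := Real.rpow_pos_of_pos (mul_pos (pow_pos hpi (n+1)) hM'.det_pos) _
  -- the constant identity
  have hconst : c' * Real.sqrt (2 * Real.pi * sc t n) = c := by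
    have hXY : (2 * Real.pi) ^ (n+1) * (covM t (n+1)).det
        = ((2 * Real.pi) ^ n * (covM t n).det) * (2 * Real.pi * sc t n) := by
      rw [det_succ hA]; ring
    rw [hc', hXY, Real.mul_rpow hX.le hY.le, Real.sqrt_eq_rpow]
    rw [mul_assoc, ← Real.rpow_add hY]
    rw [hcc]
    norm_num
  -- 1D Gaussian integral
  have hb : (0:ℝ) < (2 * sc t n)⁻¹ := by positivity
  have heqfun : (fun a : ℝ => Real.exp (-(a^2) / (2 * sc t n)))
      = fun a => Real.exp (-((2 * sc t n)⁻¹) * a^2) := by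
    funext a; congr 1; field_simp
  have gauss1d : ∀ m0 : ℝ, ∫⁻ a : ℝ, ENNReal.ofReal (Real.exp (-((a - m0)^2) / (2 * sc t n)))
      = ENNReal.ofReal (Real.sqrt (2 * Real.pi * sc t n)) := by
    intro m0
    have h1 : ∫⁻ a : ℝ, ENNReal.ofReal (Real.exp (-((a - m0)^2) / (2 * sc t n)))
        = ∫⁻ a : ℝ, ENNReal.ofReal (Real.exp (-(a^2) / (2 * sc t n))) := by
      have := lintegral_add_right_eq_self (μ := (volume : Measure ℝ))
        (fun a : ℝ => ENNReal.ofReal (Real.exp (-(a^2) / (2 * sc t n)))) (-m0)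
      simpa [sub_eq_add_neg] using this
    rw [h1]
    have hInt : Integrable (fun a : ℝ => Real.exp (-(a^2) / (2 * sc t n))) := by
      rw [heqfun]; exact integrable_exp_neg_mul_sq hb
    rw [← MeasureTheory.ofReal_integral_eq_lintegral_ofReal hInt
      (Filter.Eventually.of_forall fun a => (Real.exp_pos _).le)]
    congr 1
    rw [heqfun, integral_gaussian]
    congr 1
    rw [div_eq_mul_inv, inv_inv]
    ring
  -- now the measure computation
  have hmeas_drop : Measurable fun v : Fin (n+1) → ℝ => v ∘ Fin.castSucc :=
    measurable_pi_lambda _ fun i => measurable_pi_apply _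
  set ψ := MeasurableEquiv.piFinSuccAbove (fun _ : Fin (n+1) => ℝ) (Fin.last n) with hψdef
  have hψ : MeasurePreserving (⇑ψ) volume volume :=
    volume_preserving_piFinSuccAbove (fun _ : Fin (n+1) => ℝ) (Fin.last n)
  have key1 : ∀ (a : ℝ) (u : Fin n → ℝ), (ψ.symm (a, u)) ∘ Fin.castSucc = u := by
    intro a u
    funext j
    rw [MeasurableEquiv.piFinSuccAbove_symm_apply]
    show (Fin.insertNthEquiv (fun _ => ℝ) (Fin.last n) (a, u)) (Fin.castSucc j) = u j
    rw [Fin.insertNthEquiv_apply, ← Fin.succAbove_last, Fin.insertNth_apply_succAbove]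
  have key1b : ∀ (a : ℝ) (u : Fin n → ℝ), ψ.symm (a, u) (Fin.last n) = a := by
    intro a u
    rw [MeasurableEquiv.piFinSuccAbove_symm_apply]
    show (Fin.insertNthEquiv (fun _ => ℝ) (Fin.last n) (a, u)) (Fin.last n) = a
    rw [Fin.insertNthEquiv_apply, Fin.insertNth_apply_same]
  set f' : (Fin (n+1) → ℝ) → ℝ≥0∞ := fun v =>
    ENNReal.ofReal (c' * Real.exp (-(v ⬝ᵥ (covM t (n+1))⁻¹ *ᵥ v) / 2)) with hf'
  set f : (Fin n → ℝ) → ℝ≥0∞ := fun u =>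
    ENNReal.ofReal (c * Real.exp (-(u ⬝ᵥ (covM t n)⁻¹ *ᵥ u) / 2)) with hf
  have hf'meas : Measurable f' := measurable_gauss_density _
  have hfmeas : Measurable f := measurable_gauss_density _
  have key2 : ∀ u : Fin n → ℝ, (∫⁻ a : ℝ, f' (ψ.symm (a, u))) = f u := by
    intro u
    set P : ℝ := u ⬝ᵥ (covM t n)⁻¹ *ᵥ u with hP
    set W : ℝ := w ⬝ᵥ u with hW
    have hv : ∀ a : ℝ, (ψ.symm (a, u)) ⬝ᵥ (covM t (n+1))⁻¹ *ᵥ (ψ.symm (a, u))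
        = P + (a - W)^2 / sc t n := by
      intro a
      rw [quad_succ hA hM']
      have h1 : (fun i : Fin n => (ψ.symm (a, u)) i.castSucc) = u := key1 a u
      rw [h1, key1b a u]
    have hsplit : ∀ a : ℝ, c' * Real.exp (-(P + (a - W)^2 / sc t n) / 2)
        = (c' * Real.exp (-P / 2)) * Real.exp (-((a - W)^2) / (2 * sc t n)) := by
      intro a
      rw [mul_assoc, ← Real.exp_add]
      congr 1
      field_simp
      ring
    calc ∫⁻ a : ℝ, f' (ψ.symm (a, u))
        = ∫⁻ a : ℝ, ENNReal.ofReal (c' * Real.exp (-P / 2))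
            * ENNReal.ofReal (Real.exp (-((a - W)^2) / (2 * sc t n))) := by
          congr 1; funext a
          rw [hf']
          simp only
          rw [hv a, hsplit a, ENNReal.ofReal_mul (by positivity)]
      _ = ENNReal.ofReal (c' * Real.exp (-P / 2))
            * ∫⁻ a : ℝ, ENNReal.ofReal (Real.exp (-((a - W)^2) / (2 * sc t n))) := by
          rw [lintegral_const_mul]
          exact ENNReal.measurable_ofReal.comp
            ((((measurable_id.sub_const W).pow_const 2).neg.div_const _).exp)
      _ = ENNReal.ofReal (c' * Real.exp (-P / 2))
            * ENNReal.ofReal (Real.sqrt (2 * Real.pi * sc t n)) := by rw [gauss1d W]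
      _ = f u := by
          rw [← ENNReal.ofReal_mul (by positivity), hf]
          simp only
          rw [← hP, mul_right_comm, hconst]
  -- put everything together
  refine Measure.ext fun S hS => ?_
  rw [Measure.map_apply hmeas_drop hS]
  show (volume.withDensity f') _ = (volume.withDensity f) S
  rw [withDensity_apply _ (hmeas_drop hS), withDensity_apply _ hS,
    ← lintegral_indicator (hmeas_drop hS), ← lintegral_indicator hS]
  set G : (Fin (n+1) → ℝ) → ℝ≥0∞ :=
    ((fun v : Fin (n+1) → ℝ => v ∘ Fin.castSucc) ⁻¹' S).indicator f' with hG
  have hGmeas : Measurable G := hf'meas.indicator (hmeas_drop hS)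
  have hψs : MeasurePreserving (⇑ψ.symm) volume volume := MeasurePreserving.symm ψ hψ
  have hcomp : ∫⁻ v, G v ∂volume = ∫⁻ p : ℝ × (Fin n → ℝ), G (ψ.symm p) ∂volume :=
    (hψs.lintegral_comp hGmeas).symm
  rw [hcomp, Measure.volume_eq_prod,
    lintegral_prod_symm (fun p : ℝ × (Fin n → ℝ) => G (ψ.symm p))
      (Measurable.aemeasurable (hGmeas.comp ψ.symm.measurable))]
  have hGval : ∀ u : Fin n → ℝ, (∫⁻ a : ℝ, G (ψ.symm (a, u))) = S.indicator f u := by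
    intro u
    by_cases hu : u ∈ S
    · have : ∀ a : ℝ, G (ψ.symm (a, u)) = f' (ψ.symm (a, u)) := by
        intro a
        rw [hG, Set.indicator_of_mem]
        rw [Set.mem_preimage, key1 a u]
        exact hu
      rw [lintegral_congr this, key2 u, Set.indicator_of_mem hu]
    · have : ∀ a : ℝ, G (ψ.symm (a, u)) = 0 := by
        intro a
        rw [hG, Set.indicator_of_notMem]
        rw [Set.mem_preimage, key1 a u]
        exact hu
      rw [lintegral_congr this, Set.indicator_of_notMem hu, lintegral_zero]
  rw [lintegral_congr hGval]

end Schur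

/-- `ν_n`, the Gaussian measure in dimension `n`. -/
abbrev nu (n : ℕ) : Measure (Fin n → ℝ) := gauss n (covM t n)

/-- dropping the last coordinate -/
def dropL (n : ℕ) : (Fin (n+1) → ℝ) → (Fin n → ℝ) := fun v => v ∘ Fin.castSucc

/-- dropping several coordinates -/
def dropLE {m n : ℕ} (h : m ≤ n) : (Fin n → ℝ) → (Fin m → ℝ) :=
  fun v i => v (Fin.castLE h i)

lemma measurable_dropL (n : ℕ) : Measurable (dropL n) := by
  unfold dropL; exact measurable_pi_lambda _ (fun i => measurable_pi_apply _)

lemma measurable_dropLE {m n : ℕ} (h : m ≤ n) : Measurable (dropLE h) := by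
  unfold dropLE; exact measurable_pi_lambda _ (fun i => measurable_pi_apply _)

variable {t} in
/-- Consistency of the Gaussian family: dropping the last coordinate. -/
lemma nu_map_dropL (ht : ∀ k, t k ∈ Set.Ioc (0:ℝ) 1) (htinj : Function.Injective t)
    (n : ℕ) : Measure.map (dropL n) (nu t (n+1)) = nu t n :=
  gauss_map_dropL (covM_posDef ht htinj n) (covM_posDef ht htinj (n+1))

variable {t} in
lemma nu_univ (ht : ∀ k, t k ∈ Set.Ioc (0:ℝ) 1) (htinj : Function.Injective t)
    (n : ℕ) : nu t n Set.univ = 1 := by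
  induction n with
  | zero =>
    show (volume.withDensity _) Set.univ = 1
    rw [withDensity_apply _ MeasurableSet.univ]
    have hden : (fun u : Fin 0 → ℝ =>
        ENNReal.ofReal ((((2 * Real.pi) ^ (0:ℕ) * (covM t 0).det) ^ (-(1:ℝ)/2 : ℝ)) *
          Real.exp (-(u ⬝ᵥ (covM t 0)⁻¹.mulVec u) / 2))) = fun _ => 1 := by
      funext u
      have h1 : (covM t 0).det = 1 := Matrix.det_fin_zero
      have h2 : u ⬝ᵥ (covM t 0)⁻¹.mulVec u = 0 := by
        simp [dotProduct]
      rw [h1, h2]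
      norm_num
    rw [hden]
    rw [Measure.restrict_univ, lintegral_one]
    rw [MeasureTheory.volume_pi, Measure.pi_univ]
    simp
  | succ n ih =>
    have h := nu_map_dropL ht htinj n
    have : (Measure.map (dropL n) (nu t (n+1))) Set.univ = nu t (n+1) Set.univ := by
      rw [Measure.map_apply (measurable_dropL n) MeasurableSet.univ, Set.preimage_univ]
    rw [← this, h, ih]

variable {t} in
lemma nu_map_dropLE (ht : ∀ k, t k ∈ Set.Ioc (0:ℝ) 1) (htinj : Function.Injective t)
    {m n : ℕ} (h : m ≤ n) : Measure.map (dropLE h) (nu t n) = nu t m := by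
  induction n, h using Nat.le_induction with
  | base =>
    have hid : dropLE (le_refl m) = (id : (Fin m → ℝ) → (Fin m → ℝ)) := by
      funext v i
      show v (Fin.castLE (le_refl m) i) = v i
      have h2 : Fin.castLE (le_refl m) i = i := Fin.ext (by simp)
      rw [h2]
    rw [hid, Measure.map_id]
  | succ n hmn ih =>
    have hcomp : dropLE (Nat.le_succ_of_le hmn) = dropLE hmn ∘ dropL n := by
      funext v i
      show v (Fin.castLE _ i) = v ((Fin.castLE hmn i).castSucc)
      have h2 : (Fin.castLE hmn i).castSucc = Fin.castLE (Nat.le_succ_of_le hmn) i :=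
        Fin.ext (by simp)
      rw [h2]
    rw [hcomp, ← Measure.map_map (measurable_dropLE hmn) (measurable_dropL n),
      nu_map_dropL ht htinj n, ih]

variable {t} in
lemma nu_prob (ht : ∀ k, t k ∈ Set.Ioc (0:ℝ) 1) (htinj : Function.Injective t)
    (n : ℕ) : IsProbabilityMeasure (nu t n) := ⟨nu_univ ht htinj n⟩

section PhiTheory

variable {t : ℕ → ℝ}

/-- level-n measure of (the image of) a set -/
def lev (ht : ∀ k, t k ∈ Set.Ioc (0:ℝ) 1) (n : ℕ) (T : Set Cz) : ℝ≥0∞ :=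
  nu t (n+1) (proj t ht (n+1) '' T)

lemma phi_eq (ht : ∀ k, t k ∈ Set.Ioc (0:ℝ) 1) (T : Set Cz) :
    phi t ht T = ⨅ n, lev ht n T := rfl

lemma continuous_proj (ht : ∀ k, t k ∈ Set.Ioc (0:ℝ) 1) (n : ℕ) :
    Continuous (proj t ht n) := by
  apply continuous_pi
  intro i
  exact (continuous_eval_const _).comp continuous_subtype_val

lemma proj_dropLE (ht : ∀ k, t k ∈ Set.Ioc (0:ℝ) 1) {m n : ℕ} (h : m ≤ n) (x : Cz) :
    dropLE h (proj t ht n x) = proj t ht m x := rfl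

lemma phi_mono (ht : ∀ k, t k ∈ Set.Ioc (0:ℝ) 1) {T T' : Set Cz} (h : T ⊆ T') :
    phi t ht T ≤ phi t ht T' :=
  iInf_mono fun n => measure_mono (Set.image_mono h)

lemma phi_empty (ht : ∀ k, t k ∈ Set.Ioc (0:ℝ) 1) : phi t ht (∅ : Set Cz) = 0 := by
  rw [phi_eq]
  simp [lev]

lemma phi_ne_top (ht : ∀ k, t k ∈ Set.Ioc (0:ℝ) 1) (htinj : Function.Injective t)
    (T : Set Cz) : phi t ht T ≠ ⊤ := by
  have h1 : phi t ht T ≤ lev ht 0 T := iInf_le _ 0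
  have h2 : lev ht 0 T ≤ 1 := by
    haveI := nu_prob ht htinj 1
    exact prob_le_one
  exact ne_top_of_le_ne_top (by norm_num) (h1.trans h2)

lemma phi_le_one (ht : ∀ k, t k ∈ Set.Ioc (0:ℝ) 1) (htinj : Function.Injective t)
    (T : Set Cz) : phi t ht T ≤ 1 := by
  have h1 : phi t ht T ≤ lev ht 0 T := iInf_le _ 0
  have h2 : lev ht 0 T ≤ 1 := by
    haveI := nu_prob ht htinj 1
    exact prob_le_one
  exact h1.trans h2

/-- a measurable "cylinder" estimate: if `S' ⊆ dropLE⁻¹ S` then `ν S' ≤ ν S`. -/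
lemma nu_le_cyl (ht : ∀ k, t k ∈ Set.Ioc (0:ℝ) 1) (htinj : Function.Injective t)
    {m n : ℕ} (h : m + 1 ≤ n + 1) {S' : Set (Fin (n+1) → ℝ)}
    {S : Set (Fin (m+1) → ℝ)} (hS : MeasurableSet S) (hsub : S' ⊆ dropLE h ⁻¹' S) :
    nu t (n+1) S' ≤ nu t (m+1) S := by
  refine (measure_mono hsub).trans ?_
  rw [← nu_map_dropLE ht htinj h, Measure.map_apply (measurable_dropLE h) hS]

lemma nu_cyl (ht : ∀ k, t k ∈ Set.Ioc (0:ℝ) 1) (htinj : Function.Injective t)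
    {m n : ℕ} (h : m + 1 ≤ n + 1) {S : Set (Fin (m+1) → ℝ)}
    (hS : MeasurableSet S) : nu t (n+1) (dropLE h ⁻¹' S) = nu t (m+1) S := by
  rw [← nu_map_dropLE ht htinj h, Measure.map_apply (measurable_dropLE h) hS]

lemma lev_antitone (ht : ∀ k, t k ∈ Set.Ioc (0:ℝ) 1) (htinj : Function.Injective t)
    {T : Set Cz} (hT : IsCompact T) : Antitone (fun n => lev ht n T) := by
  apply antitone_nat_of_succ_le
  intro n
  refine nu_le_cyl ht htinj (n := n+1) (m := n) (by omega)
    ((hT.image (continuous_proj ht (n+1))).measurableSet) ?_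
  rintro u ⟨x, hx, rfl⟩
  refine Set.mem_preimage.2 ⟨x, hx, ?_⟩
  exact (proj_dropLE ht (by omega) x).symm

lemma tendsto_lev (ht : ∀ k, t k ∈ Set.Ioc (0:ℝ) 1) (htinj : Function.Injective t)
    {T : Set Cz} (hT : IsCompact T) :
    Tendsto (fun n => lev ht n T) atTop (𝓝 (phi t ht T)) := by
  rw [phi_eq]
  exact tendsto_atTop_iInf (lev_antitone ht htinj hT)

/-- two elements of `Cz` agreeing on all the `t k` are equal -/
lemma ext_proj (ht : ∀ k, t k ∈ Set.Ioc (0:ℝ) 1)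
    (htdense : Set.Icc (0:ℝ) 1 ⊆ closure (Set.range t)) {x y : Cz}
    (h : ∀ k : ℕ, (x : C(Set.Icc (0:ℝ) 1, ℝ)) ⟨t k, Set.Ioc_subset_Icc_self (ht k)⟩
      = (y : C(Set.Icc (0:ℝ) 1, ℝ)) ⟨t k, Set.Ioc_subset_Icc_self (ht k)⟩) : x = y := by
  apply Subtype.ext
  apply ContinuousMap.ext
  intro p
  have hd : Dense {p : Set.Icc (0:ℝ) 1 | (p : ℝ) ∈ Set.range t} := by
    intro q
    rw [closure_subtype]
    have him : Subtype.val '' {p : Set.Icc (0:ℝ) 1 | (p : ℝ) ∈ Set.range t}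
        = Set.range t := by
      apply Set.Subset.antisymm
      · rintro _ ⟨p, hp, rfl⟩; exact hp
      · rintro _ ⟨k, rfl⟩
        exact ⟨⟨t k, Set.Ioc_subset_Icc_self (ht k)⟩, ⟨k, rfl⟩, rfl⟩
    rw [him]
    exact htdense q.2
  have heq : Set.EqOn (⇑(x : C(Set.Icc (0:ℝ) 1, ℝ))) (⇑(y : C(Set.Icc (0:ℝ) 1, ℝ)))
      {p : Set.Icc (0:ℝ) 1 | (p : ℝ) ∈ Set.range t} := by
    rintro p ⟨k, hk⟩
    have hp : p = ⟨t k, Set.Ioc_subset_Icc_self (ht k)⟩ := Subtype.ext hk.symm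
    rw [hp]
    exact h k
  have := Continuous.ext_on hd (x : C(Set.Icc (0:ℝ) 1, ℝ)).continuous
    (y : C(Set.Icc (0:ℝ) 1, ℝ)).continuous heq
  exact congrFun this p

/-- if all projections of `u` lie in the projections of a compact `T`, then `u ∈ T` -/
lemma mem_of_proj (ht : ∀ k, t k ∈ Set.Ioc (0:ℝ) 1)
    (htdense : Set.Icc (0:ℝ) 1 ⊆ closure (Set.range t))
    {T : Set Cz} (hT : IsCompact T) {u : Cz}
    (h : ∀ n, proj t ht (n+1) u ∈ proj t ht (n+1) '' T) : u ∈ T := by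
  classical
  have hx : ∀ n : ℕ, ∃ x ∈ T, proj t ht (n+1) x = proj t ht (n+1) u := by
    intro n
    obtain ⟨x, hxT, hxe⟩ := h n
    exact ⟨x, hxT, hxe⟩
  choose x hxT hxe using hx
  obtain ⟨y, hyT, φ, hφ, hconv⟩ := hT.tendsto_subseq hxT
  suffices hyu : y = u by rwa [hyu] at hyT
  apply ext_proj ht htdense
  intro k
  set pk : Set.Icc (0:ℝ) 1 := ⟨t k, Set.Ioc_subset_Icc_self (ht k)⟩
  have hev : Continuous fun z : Cz => (z : C(Set.Icc (0:ℝ) 1, ℝ)) pk :=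
    (continuous_eval_const _).comp continuous_subtype_val
  have h1 : Tendsto (fun j => ((x ∘ φ) j : C(Set.Icc (0:ℝ) 1, ℝ)) pk) atTop
      (𝓝 ((y : C(Set.Icc (0:ℝ) 1, ℝ)) pk)) := (hev.continuousAt.tendsto.comp hconv)
  have h2 : ∀ j ≥ k + 1, ((x ∘ φ) j : C(Set.Icc (0:ℝ) 1, ℝ)) pk
      = (u : C(Set.Icc (0:ℝ) 1, ℝ)) pk := by
    intro j hj
    have hkj : k < φ j + 1 := by
      have hj2 : j ≤ φ j := hφ.le_apply
      omega
    have := congrFun (hxe (φ j)) ⟨k, hkj⟩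
    exact this
  have h3 : Tendsto (fun j => ((x ∘ φ) j : C(Set.Icc (0:ℝ) 1, ℝ)) pk) atTop
      (𝓝 ((u : C(Set.Icc (0:ℝ) 1, ℝ)) pk)) := by
    apply Tendsto.congr' _ tendsto_const_nhds
    filter_upwards [eventually_ge_atTop (k+1)] with j hj
    exact (h2 j hj).symm
  exact tendsto_nhds_unique h1 h3

/-- separation of levels: disjoint compact sets have eventually disjoint projections -/
lemma exists_sep (ht : ∀ k, t k ∈ Set.Ioc (0:ℝ) 1)
    (htdense : Set.Icc (0:ℝ) 1 ⊆ closure (Set.range t))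
    {T L : Set Cz} (hT : IsCompact T) (hL : IsCompact L) (hd : T ∩ L = ∅) :
    ∃ N, ∀ n, N ≤ n → (proj t ht (n+1) '' T) ∩ (proj t ht (n+1) '' L) = ∅ := by
  classical
  suffices hone : ∃ N, (proj t ht (N+1) '' T) ∩ (proj t ht (N+1) '' L) = ∅ by
    obtain ⟨N, hN⟩ := hone
    refine ⟨N, fun n hn => ?_⟩
    rw [Set.eq_empty_iff_forall_notMem]
    rintro u ⟨⟨x, hx, hxu⟩, ⟨y, hy, hyu⟩⟩
    have h1 : proj t ht (N+1) x ∈ (proj t ht (N+1) '' T) := ⟨x, hx, rfl⟩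
    have h2 : proj t ht (N+1) x ∈ (proj t ht (N+1) '' L) := by
      have e1 : dropLE (by omega : N+1 ≤ n+1) u = proj t ht (N+1) x := by
        rw [← hxu]; exact proj_dropLE ht _ x
      have e2 : dropLE (by omega : N+1 ≤ n+1) u = proj t ht (N+1) y := by
        rw [← hyu]; exact proj_dropLE ht _ y
      rw [← e1, e2]
      exact ⟨y, hy, rfl⟩
    exact Set.eq_empty_iff_forall_notMem.1 hN _ ⟨h1, h2⟩
  by_contra hcon
  push_neg at hcon
  have hne : ∀ N : ℕ, ∃ x ∈ T, ∃ y ∈ L, proj t ht (N+1) x = proj t ht (N+1) y := by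
    intro N
    obtain ⟨u, ⟨x, hx, hxu⟩, ⟨y, hy, hyu⟩⟩ := hcon N
    exact ⟨x, hx, y, hy, by rw [hxu, hyu]⟩
  choose x hxT y hyL hxy using hne
  obtain ⟨x0, hx0T, φ, hφ, hconvx⟩ := hT.tendsto_subseq hxT
  obtain ⟨y0, hy0L, ψ, hψ, hconvy⟩ := hL.tendsto_subseq (fun j => hyL (φ j))
  have hconvx2 : Tendsto ((x ∘ φ) ∘ ψ) atTop (𝓝 x0) := hconvx.comp hψ.tendsto_atTop
  have hxy0 : x0 = y0 := by
    apply ext_proj ht htdense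
    intro k
    set pk : Set.Icc (0:ℝ) 1 := ⟨t k, Set.Ioc_subset_Icc_self (ht k)⟩
    have hev : Continuous fun z : Cz => (z : C(Set.Icc (0:ℝ) 1, ℝ)) pk :=
      (continuous_eval_const _).comp continuous_subtype_val
    have h1 : Tendsto (fun j => (((x ∘ φ) ∘ ψ) j : C(Set.Icc (0:ℝ) 1, ℝ)) pk) atTop
        (𝓝 ((x0 : C(Set.Icc (0:ℝ) 1, ℝ)) pk)) := hev.continuousAt.tendsto.comp hconvx2
    have h2 : Tendsto (fun j => ((y ∘ φ ∘ ψ) j : C(Set.Icc (0:ℝ) 1, ℝ)) pk) atTop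
        (𝓝 ((y0 : C(Set.Icc (0:ℝ) 1, ℝ)) pk)) := hev.continuousAt.tendsto.comp hconvy
    have heq : ∀ j ≥ k + 1, (((x ∘ φ) ∘ ψ) j : C(Set.Icc (0:ℝ) 1, ℝ)) pk
        = ((y ∘ φ ∘ ψ) j : C(Set.Icc (0:ℝ) 1, ℝ)) pk := by
      intro j hj
      have hj2 : j ≤ ψ j := hψ.le_apply
      have hj3 : ψ j ≤ φ (ψ j) := hφ.le_apply
      have hkj : k < φ (ψ j) + 1 := by omega
      exact congrFun (hxy (φ (ψ j))) ⟨k, hkj⟩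
    have h3 : Tendsto (fun j => (((x ∘ φ) ∘ ψ) j : C(Set.Icc (0:ℝ) 1, ℝ)) pk) atTop
        (𝓝 ((y0 : C(Set.Icc (0:ℝ) 1, ℝ)) pk)) := by
      apply Tendsto.congr' _ h2
      filter_upwards [eventually_ge_atTop (k+1)] with j hj
      exact (heq j hj).symm
    exact tendsto_nhds_unique h1 h3
  rw [hxy0] at hx0T
  exact Set.eq_empty_iff_forall_notMem.1 hd _ ⟨hx0T, hy0L⟩

/-- additivity of `phi` on disjoint compact sets -/
lemma phi_union (ht : ∀ k, t k ∈ Set.Ioc (0:ℝ) 1) (htinj : Function.Injective t)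
    (htdense : Set.Icc (0:ℝ) 1 ⊆ closure (Set.range t))
    {T L : Set Cz} (hT : IsCompact T) (hL : IsCompact L) (hd : T ∩ L = ∅) :
    phi t ht (T ∪ L) = phi t ht T + phi t ht L := by
  obtain ⟨N, hN⟩ := exists_sep ht htdense hT hL hd
  have hev : ∀ n, N ≤ n → lev ht n (T ∪ L) = lev ht n T + lev ht n L := by
    intro n hn
    rw [lev, Set.image_union]
    rw [measure_union (Set.disjoint_iff_inter_eq_empty.2 (hN n hn))
      ((hL.image (continuous_proj ht (n+1))).measurableSet)]
    rfl
  have h1 : Tendsto (fun n => lev ht n (T ∪ L)) atTop (𝓝 (phi t ht (T ∪ L))) :=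
    tendsto_lev ht htinj (hT.union hL)
  have h2 : Tendsto (fun n => lev ht n T + lev ht n L) atTop
      (𝓝 (phi t ht T + phi t ht L)) :=
    (tendsto_lev ht htinj hT).add (tendsto_lev ht htinj hL)
  have h3 : Tendsto (fun n => lev ht n (T ∪ L)) atTop (𝓝 (phi t ht T + phi t ht L)) := by
    apply Tendsto.congr' _ h2
    filter_upwards [eventually_ge_atTop N] with n hn
    exact (hev n hn).symm
  exact tendsto_nhds_unique h1 h3

/-- additivity over finitely many pairwise disjoint compact sets -/
lemma phi_sum_range (ht : ∀ k, t k ∈ Set.Ioc (0:ℝ) 1) (htinj : Function.Injective t)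
    (htdense : Set.Icc (0:ℝ) 1 ⊆ closure (Set.range t))
    (E : ℕ → Set Cz) (hE : ∀ m, IsCompact (E m))
    (hd : ∀ i j, i ≠ j → E i ∩ E j = ∅) (M : ℕ) :
    phi t ht (⋃ m ∈ Finset.range M, E m) = ∑ m ∈ Finset.range M, phi t ht (E m) := by
  classical
  induction M with
  | zero => simp [phi_empty ht]
  | succ M ih =>
    rw [Finset.range_add_one, Finset.set_biUnion_insert, Finset.sum_insert (by simp)]
    have hUcpt : IsCompact (⋃ m ∈ Finset.range M, E m) :=
      (Finset.range M).finite_toSet.isCompact_biUnion (fun m _ => hE m)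
    have hdisj : E M ∩ (⋃ m ∈ Finset.range M, E m) = ∅ := by
      rw [Set.eq_empty_iff_forall_notMem]
      rintro z ⟨hzM, hzU⟩
      obtain ⟨m, hm, hzm⟩ := Set.mem_iUnion₂.1 hzU
      rw [Finset.mem_range] at hm
      exact Set.eq_empty_iff_forall_notMem.1 (hd M m (by omega)) z ⟨hzM, hzm⟩
    rw [phi_union ht htinj htdense (hE M) hUcpt hdisj, ih]

/-- the levels of intersections of projections are antitone -/
lemma lev_inter_antitone (ht : ∀ k, t k ∈ Set.Ioc (0:ℝ) 1) (htinj : Function.Injective t)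
    {T L : Set Cz} (hT : IsCompact T) (hL : IsCompact L) :
    Antitone (fun n => nu t (n+1) ((proj t ht (n+1) '' T) ∩ (proj t ht (n+1) '' L))) := by
  apply antitone_nat_of_succ_le
  intro n
  refine nu_le_cyl ht htinj (n := n+1) (m := n) (by omega)
    (((hT.image (continuous_proj ht (n+1))).measurableSet).inter
      ((hL.image (continuous_proj ht (n+1))).measurableSet)) ?_
  rintro u ⟨⟨x, hx, hxu⟩, ⟨y, hy, hyu⟩⟩
  refine Set.mem_preimage.2 ⟨⟨x, hx, ?_⟩, ⟨y, hy, ?_⟩⟩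
  · rw [← hxu]; exact (proj_dropLE ht (by omega) x).symm
  · rw [← hyu]; exact (proj_dropLE ht (by omega) y).symm

/-- limits of levels of intersections: `inf_n ν_n(π_n T ∩ π_n L) = φ(T ∩ L)` -/
lemma iInf_lev_inter (ht : ∀ k, t k ∈ Set.Ioc (0:ℝ) 1) (htinj : Function.Injective t)
    (htdense : Set.Icc (0:ℝ) 1 ⊆ closure (Set.range t))
    {T L : Set Cz} (hT : IsCompact T) (hL : IsCompact L) :
    ⨅ n, nu t (n+1) ((proj t ht (n+1) '' T) ∩ (proj t ht (n+1) '' L))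
      = phi t ht (T ∩ L) := by
  classical
  set b := fun n => nu t (n+1) ((proj t ht (n+1) '' T) ∩ (proj t ht (n+1) '' L)) with hb
  -- the decreasing compacts D k
  set D : ℕ → Set Cz := fun k => T ∩ (proj t ht (k+1) ⁻¹' (proj t ht (k+1) '' L)) with hD
  have hDcpt : ∀ k, IsCompact (D k) := fun k =>
    hT.inter_right ((hL.image (continuous_proj ht (k+1))).isClosed.preimage
      (continuous_proj ht (k+1)))
  have hDanti : Antitone D := by
    intro k k' hk
    rintro z ⟨hzT, hzp⟩
    obtain ⟨y, hy, hyz⟩ := hzp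
    refine ⟨hzT, ⟨y, hy, ?_⟩⟩
    have e1 : dropLE (by omega : k+1 ≤ k'+1) (proj t ht (k'+1) y)
        = proj t ht (k+1) y := proj_dropLE ht _ y
    have e2 : dropLE (by omega : k+1 ≤ k'+1) (proj t ht (k'+1) z)
        = proj t ht (k+1) z := proj_dropLE ht _ z
    rw [← e1, ← e2, hyz]
  have hDint : (⋂ k, D k) = T ∩ L := by
    apply Set.Subset.antisymm
    · intro z hz
      have hzT : z ∈ T := (Set.mem_iInter.1 hz 0).1
      refine ⟨hzT, ?_⟩
      apply mem_of_proj ht htdense hL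
      intro n
      exact (Set.mem_iInter.1 hz n).2
    · rintro z ⟨hzT, hzL⟩
      exact Set.mem_iInter.2 fun k => ⟨hzT, ⟨z, hzL, rfl⟩⟩
  -- image of the intersection is the intersection of the images
  have himage : ∀ n : ℕ, proj t ht (n+1) '' (⋂ k, D k) = ⋂ k, proj t ht (n+1) '' (D k) := by
    intro n
    apply Set.Subset.antisymm (Set.image_iInter_subset _ _)
    intro u hu
    have hsel : ∀ k : ℕ, ∃ z ∈ D k, proj t ht (n+1) z = u := by
      intro k
      obtain ⟨z, hz, hzu⟩ := Set.mem_iInter.1 hu k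
      exact ⟨z, hz, hzu⟩
    choose z hzD hzu using hsel
    have hz0 : ∀ k, z k ∈ D 0 := fun k => hDanti (Nat.zero_le k) (hzD k)
    obtain ⟨z0, hz0D, φ, hφ, hconv⟩ := (hDcpt 0).tendsto_subseq hz0
    have hz0mem : z0 ∈ ⋂ k, D k := by
      apply Set.mem_iInter.2
      intro k
      refine (hDcpt k).isClosed.mem_of_tendsto hconv ?_
      filter_upwards [eventually_ge_atTop k] with j hj
      have : φ j ≥ k := le_trans hj hφ.le_apply
      exact hDanti this (hzD (φ j))
    refine ⟨z0, hz0mem, ?_⟩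
    funext i
    set pk : Set.Icc (0:ℝ) 1 := ⟨t (i:ℕ), Set.Ioc_subset_Icc_self (ht (i:ℕ))⟩
    have hev : Continuous fun w : Cz => (w : C(Set.Icc (0:ℝ) 1, ℝ)) pk :=
      (continuous_eval_const _).comp continuous_subtype_val
    have h1 : Tendsto (fun j => ((z ∘ φ) j : C(Set.Icc (0:ℝ) 1, ℝ)) pk) atTop
        (𝓝 ((z0 : C(Set.Icc (0:ℝ) 1, ℝ)) pk)) := hev.continuousAt.tendsto.comp hconv
    have h2 : ∀ j, ((z ∘ φ) j : C(Set.Icc (0:ℝ) 1, ℝ)) pk = u i := by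
      intro j
      exact congrFun (hzu (φ j)) i
    have h3 : Tendsto (fun j => ((z ∘ φ) j : C(Set.Icc (0:ℝ) 1, ℝ)) pk) atTop
        (𝓝 (u i)) := by
      apply Tendsto.congr' _ tendsto_const_nhds
      filter_upwards [] with j
      exact (h2 j).symm
    exact tendsto_nhds_unique h1 h3
  -- step 1 : φ(T∩L) = ⨅ k φ(D k)
  have step1 : phi t ht (T ∩ L) = ⨅ k, phi t ht (D k) := by
    rw [← hDint, phi_eq]
    have hlev : ∀ n, lev ht n (⋂ k, D k) = ⨅ k, lev ht n (D k) := by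
      intro n
      rw [lev, himage n]
      refine Directed.measure_iInter (fun k => ?_) ?_ ⟨0, ?_⟩
      · exact ((hDcpt k).image (continuous_proj ht (n+1))).measurableSet.nullMeasurableSet
      · intro k k'
        refine ⟨max k k', ?_, ?_⟩
        · exact Set.image_mono (hDanti (le_max_left _ _))
        · exact Set.image_mono (hDanti (le_max_right _ _))
      · haveI := nu_prob ht htinj (n+1)
        exact (measure_lt_top _ _).ne
    calc ⨅ n, lev ht n (⋂ k, D k) = ⨅ n, ⨅ k, lev ht n (D k) := by
          exact iInf_congr hlev
      _ = ⨅ k, ⨅ n, lev ht n (D k) := iInf_comm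
      _ = ⨅ k, phi t ht (D k) := rfl
  -- step 2 : ⨅ b ≤ φ(D k) for every k
  have step2 : ∀ k, (⨅ n, b n) ≤ phi t ht (D k) := by
    intro k
    rw [phi_eq]
    refine le_iInf fun n => ?_
    have hmid : b (max n k) ≤ lev ht (max n k) (D k) := by
      apply measure_mono
      rintro u ⟨⟨xx, hxx, hxxu⟩, ⟨yy, hyy, hyyu⟩⟩
      refine ⟨xx, ⟨hxx, ?_⟩, hxxu⟩
      refine ⟨yy, hyy, ?_⟩
      have e1 : dropLE (by omega : k+1 ≤ max n k + 1) (proj t ht (max n k + 1) yy)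
          = proj t ht (k+1) yy := proj_dropLE ht _ yy
      have e2 : dropLE (by omega : k+1 ≤ max n k + 1) (proj t ht (max n k + 1) xx)
          = proj t ht (k+1) xx := proj_dropLE ht _ xx
      rw [← e1, ← e2]
      congr 1
      rw [hxxu, ← hyyu]
    calc (⨅ n, b n) ≤ b (max n k) := iInf_le _ _
      _ ≤ lev ht (max n k) (D k) := hmid
      _ ≤ lev ht n (D k) := lev_antitone ht htinj (hDcpt k) (le_max_left _ _)
  -- combine
  apply le_antisymm
  · rw [step1]
    exact le_iInf step2
  · refine le_iInf fun n => ?_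
    refine le_trans (iInf_le _ n) (measure_mono ?_)
    rintro u ⟨z, hz, rfl⟩
    exact ⟨⟨z, hz.1, rfl⟩, ⟨z, hz.2, rfl⟩⟩

/-- inner-regular subtraction: given compacts `T, L` there is a compact
`C ⊆ T \ L` with `φ(T) ≤ φ(C) + φ(T ∩ L) + δ`. -/
lemma exists_compact_sub (ht : ∀ k, t k ∈ Set.Ioc (0:ℝ) 1) (htinj : Function.Injective t)
    (htdense : Set.Icc (0:ℝ) 1 ⊆ closure (Set.range t))
    {T L : Set Cz} (hT : IsCompact T) (hL : IsCompact L) {δ : ℝ≥0∞} (hδ0 : δ ≠ 0) :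
    ∃ C, IsCompact C ∧ C ⊆ T \ L ∧
      phi t ht T ≤ phi t ht C + phi t ht (T ∩ L) + δ := by
  classical
  set δ2 := δ / 2 with hδ2
  have hδ2ne : δ2 ≠ 0 := by
    rw [hδ2]
    simp [ENNReal.div_eq_top, hδ0]
  -- choose a level n with ν_n(π_n T ∩ π_n L) close to φ(T ∩ L)
  have hlt : (⨅ n, nu t (n+1) ((proj t ht (n+1) '' T) ∩ (proj t ht (n+1) '' L)))
      < phi t ht (T ∩ L) + δ2 := by
    rw [iInf_lev_inter ht htinj htdense hT hL]
    exact ENNReal.lt_add_right (phi_ne_top ht htinj _) hδ2ne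
  obtain ⟨n, hn⟩ := iInf_lt_iff.1 hlt
  haveI := nu_prob ht htinj (n+1)
  -- inner regularity
  set G : Set (Fin (n+1) → ℝ) :=
    (proj t ht (n+1) '' T) \ (proj t ht (n+1) '' L) with hGdef
  have hGmeas : MeasurableSet G :=
    ((hT.image (continuous_proj ht (n+1))).measurableSet).diff
      ((hL.image (continuous_proj ht (n+1))).measurableSet)
  obtain ⟨F, hFsub, hFcpt, hFlt⟩ :=
    hGmeas.exists_isCompact_lt_add (μ := nu t (n+1)) (measure_lt_top _ _).ne hδ2ne
  set C : Set Cz := T ∩ (proj t ht (n+1) ⁻¹' F) with hCdef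
  have hCcpt : IsCompact C :=
    hT.inter_right (hFcpt.isClosed.preimage (continuous_proj ht (n+1)))
  have hCsub : C ⊆ T \ L := by
    rintro z ⟨hzT, hzF⟩
    refine ⟨hzT, fun hzL => ?_⟩
    have : proj t ht (n+1) z ∈ G := hFsub hzF
    exact this.2 ⟨z, hzL, rfl⟩
  refine ⟨C, hCcpt, hCsub, ?_⟩
  -- the measure of the layer π T \ F is small
  have hlayer : nu t (n+1) ((proj t ht (n+1) '' T) \ F)
      ≤ δ2 + (phi t ht (T ∩ L) + δ2) := by
    have hsplit : (proj t ht (n+1) '' T) \ F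
        ⊆ (G \ F) ∪ ((proj t ht (n+1) '' T) ∩ (proj t ht (n+1) '' L)) := by
      rintro u ⟨huT, huF⟩
      by_cases huL : u ∈ proj t ht (n+1) '' L
      · exact Or.inr ⟨huT, huL⟩
      · exact Or.inl ⟨⟨huT, huL⟩, huF⟩
    refine le_trans (measure_mono hsplit) (le_trans (measure_union_le _ _) ?_)
    refine add_le_add ?_ ?_
    · -- ν (G \ F) ≤ δ2
      rw [measure_diff hFsub hFcpt.measurableSet.nullMeasurableSet (measure_lt_top _ _).ne]
      exact tsub_le_iff_left.2 hFlt.le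
    · exact hn.le
  -- key level-wise estimate
  have hkey : ∀ k, n ≤ k →
      lev ht k T ≤ lev ht k C + (δ2 + (phi t ht (T ∩ L) + δ2)) := by
    intro k hk
    have hle : n + 1 ≤ k + 1 := by omega
    have hsubk : proj t ht (k+1) '' T
        ⊆ (proj t ht (k+1) '' C) ∪ (dropLE hle ⁻¹' ((proj t ht (n+1) '' T) \ F)) := by
      rintro u ⟨z, hz, rfl⟩
      by_cases hzF : proj t ht (n+1) z ∈ F
      · exact Or.inl ⟨z, ⟨hz, hzF⟩, rfl⟩
      · refine Or.inr (Set.mem_preimage.2 ?_)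
        rw [proj_dropLE ht hle z]
        exact ⟨⟨z, hz, rfl⟩, hzF⟩
    calc lev ht k T ≤ nu t (k+1) ((proj t ht (k+1) '' C)
          ∪ (dropLE hle ⁻¹' ((proj t ht (n+1) '' T) \ F))) := measure_mono hsubk
      _ ≤ lev ht k C + nu t (k+1) (dropLE hle ⁻¹' ((proj t ht (n+1) '' T) \ F)) :=
          measure_union_le _ _
      _ = lev ht k C + nu t (n+1) ((proj t ht (n+1) '' T) \ F) := by
          rw [nu_cyl ht htinj hle
            (((hT.image (continuous_proj ht (n+1))).measurableSet).diff
              hFcpt.measurableSet)]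
      _ ≤ lev ht k C + (δ2 + (phi t ht (T ∩ L) + δ2)) := by gcongr
  -- pass to the infimum
  have hall : ∀ k, phi t ht T ≤ lev ht k C + (δ2 + (phi t ht (T ∩ L) + δ2)) := by
    intro k
    calc phi t ht T ≤ lev ht (max k n) T := iInf_le _ _
      _ ≤ lev ht (max k n) C + (δ2 + (phi t ht (T ∩ L) + δ2)) :=
          hkey _ (le_max_right _ _)
      _ ≤ lev ht k C + (δ2 + (phi t ht (T ∩ L) + δ2)) := by
          gcongr
          exact lev_antitone ht htinj hCcpt (le_max_left _ _)
  have h1 : phi t ht T ≤ phi t ht C + (δ2 + (phi t ht (T ∩ L) + δ2)) := by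
    refine le_trans (le_iInf hall) (le_of_eq ?_)
    rw [show phi t ht C = ⨅ k, lev ht k C from rfl]
    exact ENNReal.iInf_add.symm
  calc phi t ht T ≤ phi t ht C + (δ2 + (phi t ht (T ∩ L) + δ2)) := h1
    _ = phi t ht C + phi t ht (T ∩ L) + (δ2 + δ2) := by ring
    _ = phi t ht C + phi t ht (T ∩ L) + δ := by rw [hδ2, ENNReal.add_halves]

/-- MAIN LEMMA: a compact subset of an increasing union of compacts has
`φ` bounded by the sup. -/
lemma phi_le_iSup (ht : ∀ k, t k ∈ Set.Ioc (0:ℝ) 1) (htinj : Function.Injective t)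
    (htdense : Set.Icc (0:ℝ) 1 ⊆ closure (Set.range t))
    (K : ℕ → Set Cz) (hK : ∀ m, IsCompact (K m)) (hmono : Monotone K)
    {T : Set Cz} (hT : IsCompact T) (hsub : T ⊆ ⋃ m, K m) :
    phi t ht T ≤ ⨆ m, phi t ht (K m) := by
  classical
  by_contra hcon
  push_neg at hcon
  set s : ℝ≥0∞ := ⨆ m, phi t ht (K m) with hs
  set ε : ℝ≥0∞ := phi t ht T - s with hε
  have hε0 : ε ≠ 0 := by
    intro h
    exact absurd (tsub_eq_zero_iff_le.1 h) (not_le.2 hcon)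
  have hεtop : ε ≠ ⊤ :=
    ne_top_of_le_ne_top (phi_ne_top ht htinj T) tsub_le_self
  have hstop : s ≠ ⊤ := (hcon.trans (phi_ne_top ht htinj T).lt_top).ne
  have hphiT_eq : s + ε = phi t ht T := add_tsub_cancel_of_le hcon.le
  set δ : ℕ → ℝ≥0∞ := fun m => ε / 2^(m+2) with hδ
  have hδ0 : ∀ m, δ m ≠ 0 := by
    intro m h
    rw [hδ] at h
    rcases ENNReal.div_eq_zero_iff.1 h with h | h
    · exact hε0 h
    · exact absurd h (ENNReal.pow_ne_top (by norm_num))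
  -- the recursive construction
  have hstep : ∀ (m : ℕ) (Cm : Set Cz), IsCompact Cm →
      ∃ C', IsCompact C' ∧ C' ⊆ Cm \ K m ∧
        phi t ht Cm ≤ phi t ht C' + phi t ht (Cm ∩ K m) + δ m :=
    fun m Cm hCm => exists_compact_sub ht htinj htdense hCm (hK m) (hδ0 m)
  choose! f hf1 hf2 hf3 using hstep
  set Cs : ℕ → Set Cz := fun m => Nat.rec T (fun m Cm => f m Cm) m with hCs
  have hCs0 : Cs 0 = T := rfl
  have hCssucc : ∀ m, Cs (m+1) = f m (Cs m) := fun m => rfl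
  have hCscpt : ∀ m, IsCompact (Cs m) := by
    intro m
    induction m with
    | zero => exact hT
    | succ m ih => rw [hCssucc]; exact hf1 m _ ih
  have hCsub : ∀ m, Cs (m+1) ⊆ Cs m \ K m := fun m => by
    rw [hCssucc]; exact hf2 m _ (hCscpt m)
  have hCanti : Antitone Cs :=
    antitone_nat_of_succ_le fun m => (hCsub m).trans Set.diff_subset
  have hCphi : ∀ m, phi t ht (Cs m) ≤ phi t ht (Cs (m+1)) + phi t ht (Cs m ∩ K m) + δ m :=
    fun m => by rw [hCssucc]; exact hf3 m _ (hCscpt m)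
  set E : ℕ → Set Cz := fun m => Cs m ∩ K m with hE
  have hEcpt : ∀ m, IsCompact (E m) := fun m => (hCscpt m).inter_right (hK m).isClosed
  have hEdisj' : ∀ i j, i < j → E i ∩ E j = ∅ := by
    intro i j hij
    rw [Set.eq_empty_iff_forall_notMem]
    rintro z ⟨⟨_, hzKi⟩, ⟨hzCj, _⟩⟩
    have h1 : z ∈ Cs (i+1) := hCanti (by omega : i+1 ≤ j) hzCj
    exact ((hCsub i) h1).2 hzKi
  have hEdisj : ∀ i j, i ≠ j → E i ∩ E j = ∅ := by
    intro i j hij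
    rcases lt_or_gt_of_ne hij with h | h
    · exact hEdisj' i j h
    · rw [Set.inter_comm]; exact hEdisj' j i h
  -- telescoping
  have htel : ∀ M, phi t ht T
      ≤ phi t ht (Cs M) + ∑ m ∈ Finset.range M, (phi t ht (E m) + δ m) := by
    intro M
    induction M with
    | zero => simp [hCs0]
    | succ M ih =>
      calc phi t ht T ≤ phi t ht (Cs M) + ∑ m ∈ Finset.range M, (phi t ht (E m) + δ m) := ih
        _ ≤ (phi t ht (Cs (M+1)) + phi t ht (E M) + δ M)
            + ∑ m ∈ Finset.range M, (phi t ht (E m) + δ m) := by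
            gcongr
            exact hCphi M
        _ = phi t ht (Cs (M+1)) + ∑ m ∈ Finset.range (M+1), (phi t ht (E m) + δ m) := by
            rw [Finset.sum_range_succ]; ring
  -- sum bounds
  have hsumE : ∀ M, ∑ m ∈ Finset.range M, phi t ht (E m) ≤ s := by
    intro M
    rw [← phi_sum_range ht htinj htdense E hEcpt hEdisj M]
    refine le_trans (phi_mono ht ?_) (le_iSup (fun m => phi t ht (K m)) M)
    refine Set.iUnion₂_subset fun m hm => ?_
    refine le_trans (Set.inter_subset_right) (hmono ?_)
    rw [Finset.mem_range] at hm
    omega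
  have hgeo : ∑' m : ℕ, ((2:ℝ≥0∞)⁻¹)^(m+2) = 2⁻¹ := by
    have h1 : ∀ m : ℕ, ((2:ℝ≥0∞)⁻¹)^(m+2) = ((2:ℝ≥0∞)⁻¹)^m * ((2:ℝ≥0∞)⁻¹)^2 :=
      fun m => pow_add _ m 2
    rw [tsum_congr h1, ENNReal.tsum_mul_right, ENNReal.tsum_geometric]
    have h2 : (1 - 2⁻¹ : ℝ≥0∞) = 2⁻¹ := by simp
    rw [h2, inv_inv]
    rw [pow_two, ← mul_assoc, ENNReal.mul_inv_cancel (by norm_num) (by norm_num), one_mul]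
  have hsumδ : ∀ M, ∑ m ∈ Finset.range M, δ m ≤ ε / 2 := by
    intro M
    refine le_trans (ENNReal.sum_le_tsum _) ?_
    have h1 : ∀ m : ℕ, δ m = ε * ((2:ℝ≥0∞)⁻¹)^(m+2) := by
      intro m
      show ε / 2^(m+2) = ε * ((2:ℝ≥0∞)⁻¹)^(m+2)
      rw [div_eq_mul_inv, ENNReal.inv_pow]
    rw [tsum_congr h1, ENNReal.tsum_mul_left, hgeo, ← div_eq_mul_inv]
  -- dichotomy
  by_cases hne : ∀ M, (Cs M).Nonempty
  · have hnonempty : (⋂ M, Cs M).Nonempty :=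
      IsCompact.nonempty_iInter_of_sequence_nonempty_isCompact_isClosed Cs
        (fun i => (hCsub i).trans Set.diff_subset) hne (hCs0 ▸ hT)
        (fun i => (hCscpt i).isClosed)
    obtain ⟨z, hz⟩ := hnonempty
    have hzT : z ∈ T := by
      have := Set.mem_iInter.1 hz 0
      rwa [hCs0] at this
    obtain ⟨m, hm⟩ := Set.mem_iUnion.1 (hsub hzT)
    have hzm : z ∈ Cs (m+1) := Set.mem_iInter.1 hz (m+1)
    exact ((hCsub m) hzm).2 hm
  · push_neg at hne
    obtain ⟨M, hM⟩ := hne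
    have h5 := htel M
    rw [hM, phi_empty ht, zero_add, Finset.sum_add_distrib] at h5
    have h6 : phi t ht T ≤ s + ε / 2 :=
      h5.trans (add_le_add (hsumE M) (hsumδ M))
    have h7 : s + ε / 2 < s + ε :=
      ENNReal.add_lt_add_left hstop (ENNReal.half_lt_self hε0 hεtop)
    rw [hphiT_eq] at h7
    exact absurd (lt_of_le_of_lt h6 h7) (lt_irrefl _)

end PhiTheory

end St11

/-- if compact sets `K_m` increase to `A = ⋃_m K_m`, then
`μ(A) = lim_m φ(K_m)`. -/
theorem stmt11 (t : ℕ → ℝ) (ht : ∀ k, t k ∈ Set.Ioc (0:ℝ) 1)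
    (htinj : Function.Injective t)
    (htdense : Set.Icc (0:ℝ) 1 ⊆ closure (Set.range t))
    (K : ℕ → Set Cz) (hK : ∀ m, IsCompact (K m)) (hmono : Monotone K) :
    Tendsto (fun m => phi t ht (K m)) atTop (𝓝 (mu t ht (⋃ m, K m))) := by
  have hmonophi : Monotone (fun m => phi t ht (K m)) :=
    fun a b h => St11.phi_mono ht (hmono h)
  have h2 : mu t ht (⋃ m, K m) = ⨆ m, phi t ht (K m) := by
    apply le_antisymm
    · refine iSup_le fun T => iSup_le fun hTsub => iSup_le fun hTcpt => ?_
      exact St11.phi_le_iSup ht htinj htdense K hK hmono hTcpt hTsub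
    · refine iSup_le fun m => ?_
      exact le_iSup_of_le (K m)
        (le_iSup_of_le (Set.subset_iUnion K m) (le_iSup_of_le (hK m) le_rfl))
  rw [h2]
  exact tendsto_atTop_iSup hmonophi

end
end
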